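/- arXiv:1104.3341 — 11 statements merged into one kernel-verified Lean document; each statement's English description precedes it below -/
import Mathlib

section
/- Let G be a Polish group acting continuously on a Polish space X, and let x ∈ X. If for every neighbourhood V of the identity in G the set V·x is somewhere dense in X, then for every neighbourhood V of the identity, V·x is comeagre in some neighbourhood of x. -/
open Set Filter Topology Pointwise

section Aux

variable {G X : Type*} [Group G] [TopologicalSpace G] [IsTopologicalGroup G]
    [TopologicalSpace X] [MulAction G X] [ContinuousSMul G X]

private lemma exists_sym_sq {U : Set G} (hU : U ∈ nhds (1 : G)) :
    ∃ S : Set G, IsOpen S ∧ (1 : G) ∈ S ∧ S⁻¹ = S ∧ S * S ⊆ U := by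
  obtain ⟨V, hVo, hV1, hVV⟩ := exists_open_nhds_one_mul_subset hU
  refine ⟨V ∩ V⁻¹, hVo.inter hVo.inv, ⟨hV1, by simpa using hV1⟩, ?_, ?_⟩
  · ext a; simp [and_comm]
  · exact (Set.mul_subset_mul inter_subset_left inter_subset_left).trans hVV

set_option linter.unusedSectionVars false in
private lemma smul_img (x : X) (u : G) (S : Set G) :
    u • ((· • x) '' S) = (fun w => (u * w) • x) '' S := by
  rw [← Set.image_smul, Set.image_image]
  apply Set.image_congr
  intro g _
  rw [smul_smul]

private lemma step1 (x : X)
    (h : ∀ V ∈ nhds (1 : G), (interior (closure ((· • x) '' V))).Nonempty)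
    {P : Set G} (hP : P ∈ nhds (1 : G)) :
    x ∈ interior (closure ((· • x) '' P)) := by
  obtain ⟨S, hSo, hS1, hSsym, hSS⟩ := exists_sym_sq hP
  obtain ⟨z, hz⟩ := h S (hSo.mem_nhds hS1)
  have hzc : z ∈ closure ((· • x) '' S) := interior_subset hz
  obtain ⟨p, hpI, hpS⟩ := mem_closure_iff.1 hzc _ isOpen_interior hz
  obtain ⟨s, hsS, rfl⟩ := hpS
  have hsinv : s⁻¹ ∈ S := by rw [← hSsym]; exact Set.inv_mem_inv.2 hsS
  have h1 : x ∈ s⁻¹ • interior (closure ((· • x) '' S)) :=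
    ⟨s • x, hpI, inv_smul_smul s x⟩
  rw [← interior_smul, ← closure_smul, smul_img] at h1
  have h2 : (fun w => (s⁻¹ * w) • x) '' S ⊆ (· • x) '' P := by
    rintro _ ⟨t, ht, rfl⟩
    exact ⟨s⁻¹ * t, hSS (Set.mul_mem_mul hsinv ht), rfl⟩
  exact interior_mono (closure_mono h2) h1

private lemma step1' (x : X)
    (h : ∀ V ∈ nhds (1 : G), (interior (closure ((· • x) '' V))).Nonempty)
    (u : G) {P : Set G} (hP : P ∈ nhds (1 : G)) :
    u • x ∈ interior (closure ((fun w => (u * w) • x) '' P)) := by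
  have h1 := step1 x h hP
  have h2 : u • x ∈ u • interior (closure ((· • x) '' P)) := ⟨x, h1, rfl⟩
  rwa [← interior_smul, ← closure_smul, smul_img] at h2

private lemma nwd_meagre {Y : Type*} [TopologicalSpace Y] {s : Set Y}
    (h : IsNowhereDense s) : IsMeagre s := by
  rw [isMeagre_iff_countable_union_isNowhereDense]
  exact ⟨{s}, by simpa using h, countable_singleton _, by simp⟩

end Aux

theorem stmt0 {G X : Type*} [Group G] [TopologicalSpace G] [IsTopologicalGroup G] [PolishSpace G]
    [TopologicalSpace X] [PolishSpace X] [MulAction G X] [ContinuousSMul G X] (x : X)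
    (h : ∀ V ∈ nhds (1 : G), (interior (closure ((· • x) '' V))).Nonempty) :
    ∀ V ∈ nhds (1 : G), ∃ U ∈ nhds x, IsMeagre (U \ ((· • x) '' V)) := by
  intro V hV
  letI := TopologicalSpace.upgradeIsCompletelyMetrizable G
  letI := TopologicalSpace.upgradeIsCompletelyMetrizable X
  obtain ⟨C, hCn, hCc, hCV⟩ := exists_mem_nhds_isClosed_subset hV
  -- the chain of shrinking neighbourhoods of 1
  obtain ⟨S₀, hS₀o, hS₀1, hS₀sub⟩ :=
    exists_open_nhds_one_mul_subset (interior_mem_nhds.2 hCn)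
  have hstep : ∀ S : Set G, IsOpen S → (1 : G) ∈ S →
      ∃ T : Set G, IsOpen T ∧ (1 : G) ∈ T ∧ T * T ⊆ S :=
    fun S hSo hS1 => exists_open_nhds_one_mul_subset (hSo.mem_nhds hS1)
  choose! nextW hWo' hW1' hWsq' using hstep
  let W : ℕ → Set G := fun k => Nat.rec S₀ (fun _ S => nextW S) k
  have hWprop : ∀ k, IsOpen (W k) ∧ (1 : G) ∈ W k := by
    intro k
    induction k with
    | zero => exact ⟨hS₀o, hS₀1⟩
    | succ k ih => exact ⟨hWo' _ ih.1 ih.2, hW1' _ ih.1 ih.2⟩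
  have hWo : ∀ k, IsOpen (W k) := fun k => (hWprop k).1
  have hW1 : ∀ k, (1 : G) ∈ W k := fun k => (hWprop k).2
  have hWsq : ∀ k, W (k + 1) * W (k + 1) ⊆ W k :=
    fun k => hWsq' (W k) (hWo k) (hW1 k)
  have hW0C : W 0 ⊆ C := by
    intro a ha
    have : a * 1 ∈ S₀ * S₀ := Set.mul_mem_mul ha hS₀1
    rw [mul_one] at this
    exact interior_subset (hS₀sub this)
  have Wmono : ∀ k, W (k + 1) ⊆ W k := by
    intro k a ha
    have : a * 1 ∈ W (k + 1) * W (k + 1) := Set.mul_mem_mul ha (hW1 (k + 1))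
    rw [mul_one] at this
    exact hWsq k this
  -- countable dense set
  obtain ⟨D₀, hD₀c, hD₀d⟩ := TopologicalSpace.exists_countable_dense G
  let D : Set G := insert 1 D₀
  -- basic definitions
  let ε : ℕ → ℝ := fun k => (2 : ℝ)⁻¹ ^ k
  have hεpos : ∀ k, 0 < ε k := fun k => by positivity
  let Wd : G → ℕ → Set G := fun d k => W (k + 2) ∩ {w | dist d (d * w) < ε k}
  have hWdn : ∀ d k, Wd d k ∈ nhds (1 : G) := by
    intro d k
    show W (k + 2) ∩ {w | dist d (d * w) < ε k} ∈ nhds (1 : G)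
    have ho1 : IsOpen {w : G | dist d (d * w) < ε k} :=
      isOpen_lt (continuous_const.dist (continuous_mul_left d)) continuous_const
    refine IsOpen.mem_nhds ((hWo (k + 2)).inter ho1) ⟨hW1 (k + 2), ?_⟩
    show dist d (d * 1) < ε k
    rw [mul_one, dist_self]
    exact hεpos k
  let Od : G → ℕ → Set X := fun d k =>
    interior (closure ((fun w => (d * w) • x) '' Wd d k))
  let Idx : ℕ → G → G → Prop := fun k g d =>
    d ∈ D ∧ (∃ w ∈ Wd g k, ∃ s ∈ W (k + 2), d = g * (w * s)) ∧ dist g d < 2 * ε k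
  let Nn : G → ℕ → Set X := fun g k => Od g k \ ⋃ d, ⋃ (_ : Idx k g d), Od d (k + 1)
  -- the core density claim
  have core : ∀ (k : ℕ) (g w₀ : G), w₀ ∈ Wd g k →
      ∃ d, Idx k g d ∧ (g * w₀) • x ∈ Od d (k + 1) := by
    intro k g w₀ hw₀
    set u := g * w₀ with hu
    have hdist_gu : dist g u < ε k := hw₀.2
    set S := W (k + 4) ∩ (W (k + 4))⁻¹ with hS
    have hSo : IsOpen S := (hWo (k + 4)).inter (hWo (k + 4)).inv
    have hS1 : (1 : G) ∈ S := by
      rw [hS]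
      exact ⟨hW1 (k + 4), by simpa using hW1 (k + 4)⟩
    have hΩo : IsOpen (((u * ·) '' S) ∩ Metric.ball u (ε (k + 2))) :=
      ((Homeomorph.mulLeft u).isOpenMap _ hSo).inter Metric.isOpen_ball
    have huΩ : u ∈ ((u * ·) '' S) ∩ Metric.ball u (ε (k + 2)) :=
      ⟨⟨1, hS1, mul_one u⟩, Metric.mem_ball_self (hεpos _)⟩
    obtain ⟨d, hdD₀, hdΩ⟩ := hD₀d.exists_mem_open hΩo ⟨u, huΩ⟩
    obtain ⟨⟨σ, hσS, hdσ0⟩, hdball⟩ := hdΩ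
    have hdσ : u * σ = d := hdσ0
    have hdistud : dist u d < ε (k + 2) := by
      have := Metric.mem_ball.1 hdball
      rwa [dist_comm] at this
    have hσ4 : σ ∈ W (k + 4) := hσS.1
    have hσinv4 : σ⁻¹ ∈ W (k + 4) := hσS.2
    have h24 : ε (k + 2) ≤ ε k :=
      pow_le_pow_of_le_one (by norm_num) (by norm_num) (by omega)
    refine ⟨d, ⟨Set.mem_insert_iff.2 (Or.inr hdD₀), ⟨w₀, hw₀, σ, ?_, ?_⟩, ?_⟩, ?_⟩
    · exact Wmono (k + 2) (Wmono (k + 3) hσ4)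
    · rw [← hdσ, hu, mul_assoc]
    · calc dist g d ≤ dist g u + dist u d := dist_triangle _ _ _
        _ < ε k + ε (k + 2) := by linarith
        _ ≤ 2 * ε k := by linarith
    · -- u • x ∈ Od d (k+1)
      set P := W (k + 4) ∩ {w | dist u (u * w) < ε (k + 2)} with hP
      have hPn : P ∈ nhds (1 : G) := by
        rw [hP]
        have ho1 : IsOpen {w : G | dist u (u * w) < ε (k + 2)} :=
          isOpen_lt (continuous_const.dist (continuous_mul_left u)) continuous_const
        refine IsOpen.mem_nhds ((hWo (k + 4)).inter ho1) ⟨hW1 (k + 4), ?_⟩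
        show dist u (u * 1) < ε (k + 2)
        rw [mul_one, dist_self]
        exact hεpos _
      have hs := step1' x h u hPn
      have heq : ε (k + 2) + ε (k + 2) = ε (k + 1) := by
        show (2 : ℝ)⁻¹ ^ (k + 2) + (2 : ℝ)⁻¹ ^ (k + 2) = (2 : ℝ)⁻¹ ^ (k + 1)
        ring
      have himg : (fun w => (u * w) • x) '' P ⊆
          (fun w => (d * w) • x) '' (Wd d (k + 1)) := by
        rintro _ ⟨w', hw', rfl⟩
        have hkey : d * (σ⁻¹ * w') = u * w' := by
          rw [← hdσ, mul_assoc, mul_inv_cancel_left]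
        refine ⟨σ⁻¹ * w', ⟨?_, ?_⟩, ?_⟩
        · exact hWsq (k + 3) (Set.mul_mem_mul hσinv4 hw'.1)
        · show dist d (d * (σ⁻¹ * w')) < ε (k + 1)
          rw [hkey]
          have h1 : dist u (u * w') < ε (k + 2) := hw'.2
          calc dist d (u * w') ≤ dist d u + dist u (u * w') := dist_triangle _ _ _
            _ < ε (k + 2) + ε (k + 2) := by
                rw [dist_comm] at hdistud
                exact add_lt_add hdistud h1
            _ = ε (k + 1) := heq
        · show (d * (σ⁻¹ * w')) • x = (u * w') • x
          rw [hkey]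
      exact interior_mono (closure_mono himg) hs
  -- each Nn g k is nowhere dense
  have keyN : ∀ (g : G) (k : ℕ), IsNowhereDense (Nn g k) := by
    intro g k
    have hAopen : IsOpen (⋃ d, ⋃ (_ : Idx k g d), Od d (k + 1)) :=
      isOpen_iUnion fun d => isOpen_iUnion fun _ => isOpen_interior
    rw [IsNowhereDense, Set.eq_empty_iff_forall_notMem]
    intro z hz
    have hTsub : interior (closure (Nn g k)) ⊆ Od g k := by
      have h1 : Nn g k ⊆ closure ((fun w => (g * w) • x) '' Wd g k) :=
        fun p hp => interior_subset hp.1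
      exact interior_mono (closure_minimal h1 isClosed_closure)
    have hz2 : z ∈ closure ((fun w => (g * w) • x) '' Wd g k) :=
      interior_subset (hTsub hz)
    obtain ⟨p, hpT, hpimg⟩ := mem_closure_iff.1 hz2 _ isOpen_interior hz
    obtain ⟨w₀, hw₀, rfl⟩ := hpimg
    obtain ⟨d, hd1, hd2⟩ := core k g w₀ hw₀
    have hpA : (g * w₀) • x ∈ ⋃ d, ⋃ (_ : Idx k g d), Od d (k + 1) :=
      mem_iUnion.2 ⟨d, mem_iUnion.2 ⟨hd1, hd2⟩⟩
    have hpc : (g * w₀) • x ∈ closure (Nn g k) := interior_subset hpT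
    obtain ⟨q, hqA, hqN⟩ := mem_closure_iff.1 hpc _ hAopen hpA
    exact hqN.2 hqA
  -- the meagre set M
  obtain ⟨f, hf⟩ := (hD₀c.insert (1 : G)).exists_eq_range (insert_nonempty _ _)
  let M : Set X := ⋃ n, ⋃ k, Nn (f n) k
  have hM : IsMeagre M :=
    isMeagre_iUnion fun n => isMeagre_iUnion fun k => nwd_meagre (keyN _ _)
  have hNM : ∀ g ∈ D, ∀ k, Nn g k ⊆ M := by
    intro g hg k
    rw [show D = Set.range f from hf] at hg
    obtain ⟨n, rfl⟩ := hg
    exact fun y hy => mem_iUnion.2 ⟨n, mem_iUnion.2 ⟨k, hy⟩⟩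
  -- the neighbourhood U of x
  have hxU : x ∈ Od 1 0 := by
    have := step1' x h 1 (hWdn 1 0)
    rwa [one_smul] at this
  refine ⟨Od 1 0, isOpen_interior.mem_nhds hxU, hM.mono ?_⟩
  rintro y ⟨hyU, hyV⟩
  by_contra hyM
  apply hyV
  -- construct the sequence
  have stepEx : ∀ (k : ℕ) (g : G), g ∈ D → y ∈ Od g k →
      ∃ d, Idx k g d ∧ y ∈ Od d (k + 1) := by
    intro k g hg hy
    by_contra hcon
    push_neg at hcon
    apply hyM
    refine hNM g hg k ⟨hy, ?_⟩
    intro hmem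
    obtain ⟨d, hd⟩ := mem_iUnion.1 hmem
    obtain ⟨hIdx, hOd⟩ := mem_iUnion.1 hd
    exact hcon d hIdx hOd
  choose! nxt hnxt using stepEx
  let seq : ℕ → G := fun k => Nat.rec (1 : G) (fun k g => nxt k g) k
  have hseqS : ∀ k, seq (k + 1) = nxt k (seq k) := fun _ => rfl
  have hinv : ∀ k, seq k ∈ D ∧ y ∈ Od (seq k) k := by
    intro k
    induction k with
    | zero => exact ⟨mem_insert _ _, hyU⟩
    | succ k ih =>
      have h1 := hnxt k (seq k) ih.1 ih.2
      exact ⟨h1.1.1, h1.2⟩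
  have hIdxseq : ∀ k, Idx k (seq k) (seq (k + 1)) :=
    fun k => (hnxt k (seq k) (hinv k).1 (hinv k).2).1
  -- Cauchy
  have hdistseq : ∀ k, dist (seq k) (seq (k + 1)) ≤ 2 * (2 : ℝ)⁻¹ ^ k :=
    fun k => (hIdxseq k).2.2.le
  have hcauchy : CauchySeq seq :=
    cauchySeq_of_le_geometric 2⁻¹ 2 (by norm_num) hdistseq
  obtain ⟨g, hg⟩ := cauchySeq_tendsto_of_complete hcauchy
  -- telescoping: seq n ∈ W 0
  have tele : ∀ (n k : ℕ), (seq k)⁻¹ * seq (k + n) ∈ W k := by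
    intro n
    induction n with
    | zero => intro k; simpa using hW1 k
    | succ n ih =>
      intro k
      have h1 : (seq k)⁻¹ * seq (k + 1) ∈ W (k + 1) := by
        obtain ⟨_, ⟨w, hw, s, hs, hEq⟩, _⟩ := hIdxseq k
        rw [hEq, inv_mul_cancel_left]
        exact hWsq (k + 1) (Set.mul_mem_mul (hw.1 : w ∈ W (k + 2)) hs)
      have h2 : (seq (k + 1))⁻¹ * seq ((k + 1) + n) ∈ W (k + 1) := ih (k + 1)
      have h3 : (seq k)⁻¹ * seq (k + (n + 1)) =
          ((seq k)⁻¹ * seq (k + 1)) * ((seq (k + 1))⁻¹ * seq ((k + 1) + n)) := by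
        rw [show k + (n + 1) = (k + 1) + n by ring]
        group
      rw [h3]
      exact hWsq k (Set.mul_mem_mul h1 h2)
  have hseqW0 : ∀ n, seq n ∈ W 0 := by
    intro n
    have h4 := tele n 0
    have h0 : seq 0 = (1 : G) := rfl
    rwa [h0, inv_one, one_mul, Nat.zero_add] at h4
  have hgC : g ∈ C :=
    hCc.mem_of_tendsto hg (Eventually.of_forall fun n => hW0C (hseqW0 n))
  -- g • x = y
  have hpt : ∀ k, ∃ w ∈ Wd (seq k) k, dist y ((seq k * w) • x) < ε k := by
    intro k
    have hy' : y ∈ closure ((fun w => (seq k * w) • x) '' Wd (seq k) k) :=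
      interior_subset (hinv k).2
    obtain ⟨b, hb, hdist⟩ := Metric.mem_closure_iff.1 hy' (ε k) (hεpos k)
    obtain ⟨w, hw, rfl⟩ := hb
    exact ⟨w, hw, hdist⟩
  choose wseq hw1 hw2 using hpt
  have hε0 : Tendsto ε atTop (𝓝 0) :=
    tendsto_pow_atTop_nhds_zero_of_lt_one (by norm_num) (by norm_num)
  have hu_g : Tendsto (fun k => (seq k * wseq k)) atTop (𝓝 g) := by
    rw [tendsto_iff_dist_tendsto_zero]
    have hb : ∀ k, dist (seq k * wseq k) g ≤ ε k + dist (seq k) g := by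
      intro k
      have h1 : dist (seq k) (seq k * wseq k) < ε k := (hw1 k).2
      calc dist (seq k * wseq k) g
          ≤ dist (seq k * wseq k) (seq k) + dist (seq k) g := dist_triangle _ _ _
        _ ≤ ε k + dist (seq k) g := by rw [dist_comm]; linarith
    refine squeeze_zero (fun k => dist_nonneg) hb ?_
    have h2 : Tendsto (fun k => dist (seq k) g) atTop (𝓝 0) :=
      tendsto_iff_dist_tendsto_zero.1 hg
    simpa using hε0.add h2
  have hxy1 : Tendsto (fun k => (seq k * wseq k) • x) atTop (𝓝 (g • x)) :=
    hu_g.smul tendsto_const_nhds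
  have hxy2 : Tendsto (fun k => (seq k * wseq k) • x) atTop (𝓝 y) := by
    rw [tendsto_iff_dist_tendsto_zero]
    refine squeeze_zero (fun k => dist_nonneg) (fun k => ?_) hε0
    rw [dist_comm]
    exact (hw2 k).le
  exact ⟨g, hCV hgC, tendsto_nhds_unique hxy1 hxy2⟩
end

section
/- Let G be a Polish group acting continuously on a Polish space X, and let x ∈ X. The following are equivalent: (1) for every neighbourhood V of the identity in G, V·x is comeagre in a neighbourhood of x; (2) for every neighbourhood V of the identity, V·x is somewhere dense; (3) the orbit G·x is non-meagre in X. -/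
open Set Filter Topology Metric Pointwise

section
variable {G X : Type*} [Group G] [TopologicalSpace G] [IsTopologicalGroup G]
  [TopologicalSpace X] [MulAction G X] [ContinuousSMul G X]

lemma my_union_meagre {s t : Set X} (hs : IsMeagre s) (ht : IsMeagre t) : IsMeagre (s ∪ t) := by
  unfold IsMeagre at *
  rw [Set.compl_union]
  exact inter_mem hs ht

lemma my_not_meagre [BaireSpace X] {s : Set X} (h : (interior s).Nonempty) : ¬ IsMeagre s := by
  intro hm
  have hd : Dense sᶜ := dense_of_mem_residual hm
  obtain ⟨y, hy⟩ := h
  obtain ⟨z, hz, hz2⟩ := hd.exists_mem_open isOpen_interior ⟨y, hy⟩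
  exact hz (interior_subset hz2)

lemma my_meagre_of_nd {s : Set X} (h : interior (closure s) = ∅) : IsMeagre s := by
  have : IsMeagre (closure s) := by
    unfold IsMeagre
    exact residual_of_dense_open isClosed_closure.isOpen_compl
      (interior_eq_empty_iff_dense_compl.1 h)
  exact this.mono subset_closure

lemma my_closure_subset {U : Set G} (hUo : IsOpen U) (hU1 : (1:G) ∈ U) :
    closure U ⊆ U * U := by
  intro a ha
  have hopen : IsOpen (a • U⁻¹) := (hUo.inv).smul a
  have hmem : a ∈ a • U⁻¹ := ⟨1, by simp [hU1], by simp⟩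
  obtain ⟨b, hb, hbU⟩ := mem_closure_iff.1 ha _ hopen hmem
  obtain ⟨u, hu, rfl⟩ := hb
  exact ⟨a * u, hbU, u⁻¹, Set.mem_inv.1 hu, by group⟩

lemma my_star_self (x : X)
    (hyp2 : ∀ V ∈ 𝓝 (1:G), (interior (closure ((· • x) '' V))).Nonempty)
    {W : Set G} (hW : W ∈ 𝓝 1) : x ∈ interior (closure ((· • x) '' W)) := by
  obtain ⟨U₀, hU₀o, hU₀1, hU₀W⟩ := exists_open_nhds_one_mul_subset hW
  set U : Set G := U₀ ∩ U₀⁻¹ with hUdef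
  have hUo : IsOpen U := hU₀o.inter hU₀o.inv
  have hU1 : (1:G) ∈ U := ⟨hU₀1, by simpa using hU₀1⟩
  have hUnhds : U ∈ 𝓝 (1:G) := hUo.mem_nhds hU1
  obtain ⟨y, hy⟩ := hyp2 U hUnhds
  have hyc : y ∈ closure ((· • x) '' U) := interior_subset hy
  obtain ⟨z, hz1, hz2⟩ := mem_closure_iff.1 hyc _ isOpen_interior hy
  obtain ⟨u, hu, rfl⟩ := hz2
  have hx : x ∈ u⁻¹ • interior (closure ((· • x) '' U)) := ⟨u • x, hz1, by simp⟩
  have heq : u⁻¹ • interior (closure ((· • x) '' U))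
      = interior (closure (u⁻¹ • ((· • x) '' U))) := by
    rw [closure_smul, interior_smul]
  rw [heq] at hx
  refine interior_mono (closure_mono ?_) hx
  rintro w ⟨w', ⟨v, hv, rfl⟩, rfl⟩
  exact ⟨u⁻¹ * v, hU₀W (Set.mul_mem_mul (Set.mem_inv.1 hu.2) hv.1), (smul_smul _ _ _).symm⟩

lemma my_star_orbit (x : X)
    (hyp2 : ∀ V ∈ 𝓝 (1:G), (interior (closure ((· • x) '' V))).Nonempty)
    (g : G) {W : Set G} (hW : W ∈ 𝓝 1) :
    g • x ∈ interior (closure ((· • (g • x)) '' W)) := by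
  set W' : Set G := (fun u => g * u * g⁻¹) ⁻¹' W with hW'def
  have hW' : W' ∈ 𝓝 (1:G) := by
    have hc : Continuous (fun u : G => g * u * g⁻¹) := by continuity
    apply (hc.continuousAt (x := (1:G))).preimage_mem_nhds
    simpa using hW
  have hx := my_star_self x hyp2 hW'
  have hgx : g • x ∈ g • interior (closure ((· • x) '' W')) := Set.smul_mem_smul_set hx
  have heq : g • interior (closure ((· • x) '' W'))
      = interior (closure (g • ((· • x) '' W'))) := by rw [closure_smul, interior_smul]
  rw [heq] at hgx
  refine interior_mono (closure_mono ?_) hgx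
  rintro w ⟨w', ⟨v, hv, rfl⟩, rfl⟩
  refine ⟨g * v * g⁻¹, hv, ?_⟩
  show (g * v * g⁻¹) • g • x = g • v • x
  rw [smul_smul, smul_smul]
  congr 1
  group

theorem my_main [PolishSpace G] [PolishSpace X] (x : X)
    (hyp2 : ∀ V ∈ 𝓝 (1:G), (interior (closure ((· • x) '' V))).Nonempty)
    {V : Set G} (hV : V ∈ 𝓝 1) :
    ∃ U ∈ 𝓝 x, IsMeagre (U \ ((· • x) '' V)) := by
  letI := TopologicalSpace.upgradeIsCompletelyMetrizable G
  letI := TopologicalSpace.upgradeIsCompletelyMetrizable X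
  obtain ⟨U₀, hU₀o, hU₀1, hU₀V⟩ := exists_open_nhds_one_mul_subset hV
  -- the shrinking sequence of neighborhoods of 1
  have hQex : ∀ S : Set G, IsOpen S → (1:G) ∈ S →
      ∃ T : Set G, (IsOpen T ∧ (1:G) ∈ T) ∧ T * T ⊆ S := by
    intro S hSo hS1
    obtain ⟨T, a, b, c⟩ := exists_open_nhds_one_mul_subset (hSo.mem_nhds hS1)
    exact ⟨T, ⟨a, b⟩, c⟩
  let Qs : ℕ → {S : Set G // IsOpen S ∧ (1:G) ∈ S} := fun n =>
    Nat.rec (motive := fun _ => {S : Set G // IsOpen S ∧ (1:G) ∈ S}) ⟨U₀, hU₀o, hU₀1⟩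
      (fun _ ih => ⟨(hQex ih.1 ih.2.1 ih.2.2).choose, (hQex ih.1 ih.2.1 ih.2.2).choose_spec.1⟩) n
  let Q : ℕ → Set G := fun n => (Qs n).1
  have hQo : ∀ n, IsOpen (Q n) := fun n => (Qs n).2.1
  have hQ1 : ∀ n, (1:G) ∈ Q n := fun n => (Qs n).2.2
  have hQmul : ∀ n, Q (n+1) * Q (n+1) ⊆ Q n := fun n =>
    (hQex (Qs n).1 (Qs n).2.1 (Qs n).2.2).choose_spec.2
  have hQ0 : Q 0 = U₀ := rfl
  -- the allowed increments
  let R : ℕ → G → Set G := fun n g =>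
    Q (n+1) ∩ ((fun u => u * g) ⁻¹' Metric.ball g ((1/2:ℝ)^n))
  have hRnhds : ∀ n g, R n g ∈ 𝓝 (1:G) := by
    intro n g
    refine inter_mem ((hQo (n+1)).mem_nhds (hQ1 (n+1))) ?_
    refine (continuous_mul_right g).continuousAt.preimage_mem_nhds ?_
    simpa using Metric.ball_mem_nhds g (by positivity : (0:ℝ) < (1/2:ℝ)^n)
  have hRQ : ∀ n g, R n g ⊆ Q (n+1) := fun n g => inter_subset_left
  have hRdist : ∀ n g u, u ∈ R n g → dist (u * g) g < (1/2:ℝ)^n := fun n g u hu =>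
    mem_ball.1 hu.2
  -- the base open set
  set N : Set X := interior (closure ((· • x) '' (R 0 1))) with hNdef
  have hxN : x ∈ N := my_star_self x hyp2 (hRnhds 0 1)
  have hNo : IsOpen N := isOpen_interior
  -- piece invariants
  let PG : ℕ → Set X × G → Prop := fun n p =>
    IsOpen p.1 ∧ p.2 • x ∈ p.1 ∧ (1 ≤ n → p.1 ⊆ Metric.ball (p.2 • x) ((1/2:ℝ)^n)) ∧
      p.1 ⊆ closure ((· • (p.2 • x)) '' (R n p.2))
  let Good : ∀ _ : ℕ, Set (Set X × G) → Prop := fun n L =>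
    L.Countable ∧ (∀ p ∈ L, ∀ q ∈ L, p ≠ q → Disjoint p.1 q.1) ∧ ∀ p ∈ L, PG n p
  let Link : ℕ → Set (Set X × G) → Set (Set X × G) → Prop := fun n L L' =>
    (∀ p' ∈ L', ∃ p ∈ L, closure p'.1 ⊆ p.1 ∧ ∃ u ∈ R n p.2, p'.2 = u * p.2) ∧
    (∀ p ∈ L, ∀ O : Set X, IsOpen O → O.Nonempty → O ⊆ p.1 →
      ∃ p' ∈ L', (p'.1 ∩ O).Nonempty)
  -- the key step
  have hstep : ∀ n L, Good n L → ∃ L', Good (n+1) L' ∧ Link n L L' := by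
    intro n L hL
    obtain ⟨hLc, hLd, hLPG⟩ := hL
    have hF : ∀ p ∈ L, ∀ O : Set X, IsOpen O → O.Nonempty → O ⊆ p.1 →
        ∃ q : Set X × G, IsOpen q.1 ∧ q.1.Nonempty ∧ closure q.1 ⊆ O ∧
          (∃ u ∈ R n p.2, q.2 = u * p.2) ∧ PG (n+1) q := by
      intro p hp O hOo hOne hOsub
      obtain ⟨hp1, hpx, hp3, hpcl⟩ := hLPG p hp
      obtain ⟨y0, hy0⟩ := hOne
      have hy0c : y0 ∈ closure ((· • (p.2 • x)) '' (R n p.2)) := hpcl (hOsub hy0)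
      obtain ⟨z, hzO, hzim⟩ := mem_closure_iff.1 hy0c O hOo hy0
      obtain ⟨u, hu, rfl⟩ := hzim
      have hzO' : (u * p.2) • x ∈ O := by rw [← smul_smul]; exact hzO
      set g' : G := u * p.2 with hg'def
      have hstar := my_star_orbit x hyp2 g' (hRnhds (n+1) g')
      set O₂ : Set X := O ∩ interior (closure ((· • (g' • x)) '' (R (n+1) g'))) ∩
        Metric.ball (g' • x) ((1/2:ℝ)^(n+1)) with hO₂def
      have hO₂o : IsOpen O₂ := (hOo.inter isOpen_interior).inter isOpen_ball
      have hzO₂ : g' • x ∈ O₂ :=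
        ⟨⟨hzO', hstar⟩, mem_ball_self (by positivity)⟩
      obtain ⟨ε, hε, hball⟩ := Metric.isOpen_iff.1 hO₂o _ hzO₂
      have hhalf : Metric.ball (g' • x) (ε/2) ⊆ O₂ :=
        (ball_subset_ball (by linarith)).trans hball
      refine ⟨(Metric.ball (g' • x) (ε/2), g'), isOpen_ball,
        ⟨_, mem_ball_self (by positivity)⟩, ?_, ⟨u, hu, rfl⟩,
        isOpen_ball, mem_ball_self (by positivity), fun _ => ?_, ?_⟩
      · calc closure (Metric.ball (g' • x) (ε/2)) ⊆ Metric.closedBall (g' • x) (ε/2) :=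
            closure_ball_subset_closedBall
          _ ⊆ Metric.ball (g' • x) ε := closedBall_subset_ball (by linarith)
          _ ⊆ O₂ := hball
          _ ⊆ O := fun y hy => hy.1.1
      · exact fun y hy => (hhalf hy).2
      · exact fun y hy => interior_subset (hhalf hy).1.2
    -- maximal disjoint families
    have hMex : ∀ p, p ∈ L → ∃ M : Set (Set X × G),
        (∀ q ∈ M, IsOpen q.1 ∧ q.1.Nonempty ∧ closure q.1 ⊆ p.1 ∧
          (∃ u ∈ R n p.2, q.2 = u * p.2) ∧ PG (n+1) q) ∧
        (∀ q ∈ M, ∀ q' ∈ M, q ≠ q' → Disjoint q.1 q'.1) ∧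
        (∀ O : Set X, IsOpen O → O.Nonempty → O ⊆ p.1 → ∃ q ∈ M, (q.1 ∩ O).Nonempty) := by
      intro p hp
      set A : Set (Set (Set X × G)) := {M | (∀ q ∈ M, IsOpen q.1 ∧ q.1.Nonempty ∧
        closure q.1 ⊆ p.1 ∧ (∃ u ∈ R n p.2, q.2 = u * p.2) ∧ PG (n+1) q) ∧
        (∀ q ∈ M, ∀ q' ∈ M, q ≠ q' → Disjoint q.1 q'.1)} with hAdef
      have hchainA : ∀ c ⊆ A, IsChain (· ⊆ ·) c → ∃ ub ∈ A, ∀ s ∈ c, s ⊆ ub := by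
        intro c hcA hchain
        refine ⟨⋃₀ c, ⟨?_, ?_⟩, fun s hs => subset_sUnion_of_mem hs⟩
        · rintro q ⟨M', hM', hq⟩
          exact (hcA hM').1 q hq
        · rintro q ⟨M', hM', hq⟩ q' ⟨M'', hM'', hq'⟩ hne
          rcases eq_or_ne M' M'' with rfl | hMne
          · exact (hcA hM').2 q hq q' hq' hne
          · rcases hchain hM' hM'' hMne with h | h
            · exact (hcA hM'').2 q (h hq) q' hq' hne
            · exact (hcA hM').2 q hq q' (h hq') hne
      obtain ⟨M, hMmax⟩ := zorn_subset A hchainA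
      · refine ⟨M, hMmax.prop.1, hMmax.prop.2, ?_⟩
        intro O hOo hOne hOsub
        by_contra hno
        push_neg at hno
        have hnoO : ∀ q ∈ M, q.1 ∩ O = ∅ := hno
        obtain ⟨q, hq1, hq2, hq3, hq4, hq5⟩ := hF p hp O hOo hOne hOsub
        have hqO : q.1 ⊆ O := fun y hy => hq3 (subset_closure hy)
        have hqM : q ∉ M := by
          intro hmem
          obtain ⟨w, hw⟩ := hq2
          exact absurd (hnoO q hmem) (by
            refine Set.nonempty_iff_ne_empty.1 ⟨w, hw, hqO hw⟩)
        have hins : insert q M ∈ A := by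
          constructor
          · rintro r (rfl | hr)
            · exact ⟨hq1, hq2, hq3.trans hOsub, hq4, hq5⟩
            · exact hMmax.prop.1 r hr
          · rintro r (rfl | hr) r' (rfl | hr') hne
            · exact absurd rfl hne
            · refine Set.disjoint_left.2 fun z hz hz' => ?_
              have : z ∈ r'.1 ∩ O := ⟨hz', hqO hz⟩
              rw [hnoO r' hr'] at this
              exact this
            · refine Set.disjoint_left.2 fun z hz hz' => ?_
              have : z ∈ r.1 ∩ O := ⟨hz, hqO hz'⟩
              rw [hnoO r hr] at this
              exact this
            · exact hMmax.prop.2 r hr r' hr' hne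
        have := hMmax.2 hins (subset_insert q M)
        exact hqM (this (mem_insert q M))
    choose Mf hMf1 hMf2 hMf3 using hMex
    refine ⟨⋃ (p : L), Mf p.1 p.2, ⟨?_, ?_, ?_⟩, ?_, ?_⟩
    · haveI : Countable L := hLc.to_subtype
      refine Set.countable_iUnion fun p => ?_
      refine Set.PairwiseDisjoint.countable_of_isOpen
        (fun q hq q' hq' hne => hMf2 p.1 p.2 q hq q' hq' hne)
        (fun q hq => (hMf1 p.1 p.2 q hq).1) (fun q hq => (hMf1 p.1 p.2 q hq).2.1)
    · rintro q hq q' hq' hne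
      obtain ⟨p, hqp⟩ := Set.mem_iUnion.1 hq
      obtain ⟨p', hqp'⟩ := Set.mem_iUnion.1 hq'
      by_cases hpp : p = p'
      · subst hpp
        exact hMf2 p.1 p.2 q hqp q' hqp' hne
      · have hne2 : (p : Set X × G) ≠ (p' : Set X × G) := fun h => hpp (Subtype.ext h)
        have hd := hLd p.1 p.2 p'.1 p'.2 hne2
        refine hd.mono ?_ ?_
        · exact (subset_closure.trans (hMf1 p.1 p.2 q hqp).2.2.1)
        · exact (subset_closure.trans (hMf1 p'.1 p'.2 q' hqp').2.2.1)
    · rintro q hq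
      obtain ⟨p, hqp⟩ := Set.mem_iUnion.1 hq
      exact (hMf1 p.1 p.2 q hqp).2.2.2.2
    · rintro q' hq'
      obtain ⟨p, hqp⟩ := Set.mem_iUnion.1 hq'
      exact ⟨p.1, p.2, (hMf1 p.1 p.2 q' hqp).2.2.1, (hMf1 p.1 p.2 q' hqp).2.2.2.1⟩
    · intro p hp O hOo hOne hOsub
      obtain ⟨q, hqM, hqne⟩ := hMf3 p hp O hOo hOne hOsub
      exact ⟨q, Set.mem_iUnion.2 ⟨⟨p, hp⟩, hqM⟩, hqne⟩
  -- the root is good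
  have hGood0 : Good 0 {((N, (1:G)) : Set X × G)} := by
    refine ⟨Set.countable_singleton _, ?_, ?_⟩
    · rintro p rfl q rfl hne
      exact absurd rfl hne
    · rintro p rfl
      refine ⟨hNo, by simpa using hxN, fun h => by omega, ?_⟩
      show N ⊆ closure ((· • ((1:G) • x)) '' (R 0 1))
      simp only [one_smul]
      exact interior_subset
  -- the sequence of levels
  let seq : ∀ _ : ℕ, {L : Set (Set X × G) // Good _ L} := fun n =>
    Nat.rec (motive := fun n => {L : Set (Set X × G) // Good n L})
      ⟨{((N, (1:G)) : Set X × G)}, hGood0⟩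
      (fun k ih => ⟨(hstep k ih.1 ih.2).choose, (hstep k ih.1 ih.2).choose_spec.1⟩) n
  have hseqlink : ∀ n, Link n (seq n).1 (seq (n+1)).1 := fun n =>
    (hstep n (seq n).1 (seq n).2).choose_spec.2
  have hseq0 : (seq 0).1 = {((N, (1:G)) : Set X × G)} := rfl
  -- the open dense levels
  let E : ℕ → Set X := fun n => ⋃ p ∈ (seq n).1, p.1
  have hEo : ∀ n, IsOpen (E n) :=
    fun n => isOpen_biUnion fun p hp => ((seq n).2.2.2 p hp).1
  have hE0 : E 0 = N := by
    show ⋃ p ∈ ({((N, (1:G)) : Set X × G)} : Set (Set X × G)), p.1 = N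
    simp
  have hdense : ∀ n, N ⊆ closure (E n) := by
    intro n
    induction n with
    | zero => rw [hE0]; exact subset_closure
    | succ k ih =>
      have hsub : E k ⊆ closure (E (k+1)) := by
        intro y hy
        obtain ⟨p, hp, hyp⟩ := Set.mem_iUnion₂.1 hy
        rw [_root_.mem_closure_iff]
        intro O hOo hyO
        obtain ⟨q, hq, w, hw1, hw2, _⟩ := (hseqlink k).2 p hp (O ∩ p.1)
          (hOo.inter ((seq k).2.2.2 p hp).1) ⟨y, hyO, hyp⟩ inter_subset_right
        exact ⟨w, hw2, Set.mem_iUnion₂.2 ⟨q, hq, hw1⟩⟩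
      refine ih.trans ?_
      rw [← closure_closure (s := E (k+1))]
      exact closure_mono hsub
  have hmeag : IsMeagre (N \ ⋂ n, E n) := by
    rw [Set.diff_iInter]
    apply isMeagre_iUnion
    intro n
    have h1 : N \ E n ⊆ closure (E n) \ E n := fun y hy => ⟨hdense n hy.1, hy.2⟩
    refine (my_meagre_of_nd ?_).mono h1
    have hcl : IsClosed (closure (E n) \ E n) := by
      rw [Set.diff_eq]
      exact isClosed_closure.inter (hEo n).isClosed_compl
    rw [hcl.closure_eq]
    rw [Set.eq_empty_iff_forall_notMem]
    intro y hy
    have hy1 : y ∈ closure (E n) \ E n := interior_subset hy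
    obtain ⟨z, hz1, hz2⟩ := mem_closure_iff.1 hy1.1 _ isOpen_interior hy
    exact (interior_subset hz1).2 hz2
  -- extraction: every point of the intersection is in V • x
  have hext : ∀ y, y ∈ ⋂ n, E n → y ∈ (· • x) '' V := by
    intro y hy
    have hy' : ∀ n, y ∈ E n := Set.mem_iInter.1 hy
    have hexn : ∀ n, ∃ p, p ∈ (seq n).1 ∧ y ∈ p.1 := by
      intro n
      obtain ⟨p, hp, hyp⟩ := Set.mem_iUnion₂.1 (hy' n)
      exact ⟨p, hp, hyp⟩
    choose p hp hyp using hexn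
    have huniq : ∀ n q, q ∈ (seq n).1 → y ∈ q.1 → q = p n := by
      intro n q hq hyq
      by_contra hne
      exact (Set.disjoint_left.1 ((seq n).2.2.1 q hq (p n) (hp n) hne)) hyq (hyp n)
    have hchild : ∀ n, closure (p (n+1)).1 ⊆ (p n).1 ∧
        ∃ u ∈ R n (p n).2, (p (n+1)).2 = u * (p n).2 := by
      intro n
      obtain ⟨q, hq, hcl, hu⟩ := (hseqlink n).1 (p (n+1)) (hp (n+1))
      have heq : q = p n := huniq n q hq (hcl (subset_closure (hyp (n+1))))
      rw [heq] at hcl hu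
      exact ⟨hcl, hu⟩
    set gs : ℕ → G := fun n => (p n).2 with hgsdef
    have hgs0 : gs 0 = 1 := by
      have h0 : p 0 ∈ ({((N, (1:G)) : Set X × G)} : Set (Set X × G)) := hp 0
      have : p 0 = ((N, (1:G)) : Set X × G) := Set.mem_singleton_iff.1 h0
      show (p 0).2 = 1
      rw [this]
    have hprod : ∀ j k, gs (k + j) * (gs k)⁻¹ ∈ Q k := by
      intro j
      induction j with
      | zero => intro k; simpa using hQ1 k
      | succ j ih =>
        intro k
        have h1 : gs ((k+1) + j) * (gs (k+1))⁻¹ ∈ Q (k+1) := ih (k+1)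
        obtain ⟨-, u, hu, hrel⟩ := hchild k
        have h2 : gs (k+1) * (gs k)⁻¹ ∈ Q (k+1) := by
          show (p (k+1)).2 * ((p k).2)⁻¹ ∈ Q (k+1)
          rw [hrel, mul_inv_cancel_right]
          exact hRQ k (p k).2 hu
        have h3 : k + (j+1) = (k+1) + j := by omega
        rw [h3]
        have h4 : gs ((k+1)+j) * (gs k)⁻¹
            = (gs ((k+1)+j) * (gs (k+1))⁻¹) * (gs (k+1) * (gs k)⁻¹) := by group
        rw [h4]
        exact hQmul k (Set.mul_mem_mul h1 h2)
    have hgsU : ∀ n, gs n ∈ Q 0 := by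
      intro n
      have := hprod n 0
      simpa [hgs0] using this
    have hdist2 : ∀ n, dist (gs n) (gs (n+1)) ≤ (1:ℝ) * (1/2)^n := by
      intro n
      obtain ⟨-, u, hu, hrel⟩ := hchild n
      have hd := hRdist n (gs n) u hu
      rw [one_mul, dist_comm]
      show dist ((p (n+1)).2) (gs n) ≤ (1/2:ℝ)^n
      rw [hrel]
      exact le_of_lt hd
    have hcauchy : CauchySeq gs := cauchySeq_of_le_geometric (1/2) 1 (by norm_num) hdist2
    obtain ⟨g, hg⟩ := cauchySeq_tendsto_of_complete hcauchy
    have hgU : g ∈ closure (Q 0) := mem_closure_of_tendsto hg (Filter.Eventually.of_forall hgsU)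
    have hgV : g ∈ V := hU₀V (my_closure_subset hU₀o hU₀1 (by rwa [hQ0] at hgU))
    have hlim1 : Tendsto (fun n => gs n • x) atTop (𝓝 (g • x)) := hg.smul tendsto_const_nhds
    have hlim2 : Tendsto (fun n => gs n • x) atTop (𝓝 y) := by
      rw [tendsto_iff_dist_tendsto_zero]
      refine squeeze_zero' (Filter.Eventually.of_forall fun n => dist_nonneg)
        ?_ (tendsto_pow_atTop_nhds_zero_of_lt_one (r := (1/2:ℝ)) (by norm_num) (by norm_num))
      refine Filter.eventually_atTop.2 ⟨1, fun n hn => ?_⟩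
      have hball := ((seq n).2.2.2 (p n) (hp n)).2.2.1 hn (hyp n)
      rw [mem_ball] at hball
      rw [dist_comm]
      exact le_of_lt hball
    exact ⟨g, hgV, tendsto_nhds_unique hlim1 hlim2⟩
  refine ⟨N, hNo.mem_nhds hxN, ?_⟩
  apply hmeag.mono
  intro y hy
  exact ⟨hy.1, fun hyI => hy.2 (hext y hyI)⟩
end

theorem stmt1 {G X : Type*} [Group G] [TopologicalSpace G] [IsTopologicalGroup G] [PolishSpace G]
    [TopologicalSpace X] [PolishSpace X] [MulAction G X] [ContinuousSMul G X] (x : X) :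
    List.TFAE
      [∀ V ∈ nhds (1 : G), ∃ U ∈ nhds x, IsMeagre (U \ ((· • x) '' V)),
       ∀ V ∈ nhds (1 : G), (interior (closure ((· • x) '' V))).Nonempty,
       ¬ IsMeagre (MulAction.orbit G x : Set X)] := by
  letI := TopologicalSpace.upgradeIsCompletelyMetrizable X
  tfae_have 2 → 1 := by
    intro h2 V hV
    exact my_main x h2 hV
  tfae_have 1 → 3 := by
    intro h1 h3
    obtain ⟨U, hU, hme⟩ := h1 (univ : Set G) univ_mem
    have horb : (· • x) '' (univ : Set G) = MulAction.orbit G x := by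
      rw [Set.image_univ]; rfl
    have hUm : IsMeagre U := by
      have hsub : U ⊆ (U \ ((· • x) '' (univ : Set G))) ∪ MulAction.orbit G x := by
        intro y hy
        by_cases h : y ∈ (· • x) '' (univ : Set G)
        · exact Or.inr (horb ▸ h)
        · exact Or.inl ⟨hy, h⟩
      exact (my_union_meagre hme h3).mono hsub
    exact my_not_meagre ⟨x, mem_interior_iff_mem_nhds.2 hU⟩ hUm
  tfae_have 3 → 2 := by
    intro h3 V hV
    by_contra hne
    have hVempty : interior (closure ((· • x) '' V)) = ∅ := not_nonempty_iff_eq_empty.1 hne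
    obtain ⟨W, hWV, hWo, hW1⟩ := mem_nhds_iff.1 hV
    have hWe : interior (closure ((· • x) '' W)) = ∅ := by
      have hsub := interior_mono (closure_mono (Set.image_mono (f := (· • x)) hWV))
      rw [hVempty] at hsub
      exact Set.subset_empty_iff.1 hsub
    obtain ⟨D, hDc, hDd⟩ := TopologicalSpace.exists_countable_dense G
    apply h3
    have hcover : MulAction.orbit G x ⊆ ⋃ d ∈ D, d • ((· • x) '' W) := by
      rintro y ⟨g, rfl⟩
      have hne2 : (g • W⁻¹ : Set G).Nonempty := ⟨g, 1, by simp [hW1], by simp⟩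
      have hopen : IsOpen (g • W⁻¹ : Set G) := hWo.inv.smul g
      obtain ⟨d, hdD, hd⟩ := hDd.exists_mem_open hopen hne2
      obtain ⟨w, hw, rfl⟩ := hd
      refine Set.mem_biUnion hdD ?_
      refine ⟨w⁻¹ • x, ⟨w⁻¹, Set.mem_inv.1 hw, rfl⟩, ?_⟩
      show (g * w) • (w⁻¹ • x) = (fun m => m • x) g
      rw [smul_smul]
      show (g * w * w⁻¹) • x = g • x
      congr 1
      group
    refine IsMeagre.mono hcover ?_
    unfold IsMeagre
    rw [Set.compl_iUnion₂]
    refine (countable_bInter_mem hDc).2 fun d hd => ?_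
    have : IsMeagre (d • ((· • x) '' W)) := by
      apply my_meagre_of_nd
      rw [closure_smul, interior_smul, hWe, Set.smul_set_empty]
    exact this
  tfae_finish
end

section
/- Let G be a Polish group acting continuously on a Polish space X. If the orbit G·x is non-meagre, then there is a non-empty open set O ⊆ X such that: for every non-empty open V ⊆ O and every neighbourhood U of the identity in G, there is a non-empty open W ⊆ V on which the action of U is topologically transitive (i.e., for all non-empty open W₀, W₁ ⊆ W there exists g ∈ U with gW₀ ∩ W₁ ≠ ∅). -/
open Set MulAction

/-- Frontier-type lemma: a closed set minus its interior is nowhere dense, hence meagre. -/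
lemma aux_diff_interior_isMeagre {X : Type*} [TopologicalSpace X] {t : Set X} (ht : IsClosed t) :
    IsMeagre (t \ interior t) := by
  rw [isMeagre_iff_countable_union_isNowhereDense]
  refine ⟨{t \ interior t}, ?_, countable_singleton _, by simp⟩
  rintro s rfl
  have hclosed : IsClosed (t \ interior t) := ht.sdiff isOpen_interior
  rw [hclosed.isNowhereDense_iff]
  ext p
  simp only [mem_interior, mem_empty_iff_false, iff_false]
  rintro ⟨u, hu, huo, hpu⟩
  have : p ∈ interior t := mem_interior.2 ⟨u, fun q hq => (hu hq).1, huo, hpu⟩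
  exact (hu hpu).2 this

/-- If the orbit of `y` is non-meagre, then for every neighbourhood `U` of `1`,
the set `U • y` is non-meagre. -/
lemma aux_nonmeagre_smul {G X : Type*} [Group G] [TopologicalSpace G] [IsTopologicalGroup G]
    [PolishSpace G] [TopologicalSpace X] [MulAction G X] [ContinuousSMul G X] (y : X)
    (h : ¬ IsMeagre (orbit G y : Set X)) {U : Set G} (hU : U ∈ nhds (1 : G)) :
    ¬ IsMeagre ((· • y) '' U) := by
  intro hm
  apply h
  -- cover G by countably many translates g * U
  have hf : ∀ g : G, (g * ·) '' U ∈ nhds g := by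
    intro g
    have := (Homeomorph.mulLeft g).isOpenMap.image_mem_nhds hU
    simpa using this
  obtain ⟨t, htc, htU⟩ := TopologicalSpace.countable_cover_nhds hf
  have horb : (orbit G y : Set X) ⊆ ⋃ g ∈ t, (g • ·) '' ((· • y) '' U) := by
    rintro z ⟨g0, rfl⟩
    have : g0 ∈ ⋃ g ∈ t, (g * ·) '' U := htU ▸ mem_univ g0
    obtain ⟨g, hg, hmem⟩ := mem_iUnion₂.1 this
    obtain ⟨u, hu, rfl⟩ := hmem
    have : (g * u) • y = g • (u • y) := mul_smul g u y
    exact mem_iUnion₂.2 ⟨g, hg, ⟨u • y, ⟨u, hu, rfl⟩, this.symm⟩⟩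
  have hmeagre : ∀ g : G, IsMeagre ((g • ·) '' ((· • y) '' U)) := by
    intro g
    have himg : (g • ·) '' ((· • y) '' U) = (g⁻¹ • ·) ⁻¹' ((· • y) '' U) := by
      ext z
      constructor
      · rintro ⟨w, hw, rfl⟩
        simpa [inv_smul_smul] using hw
      · intro hz
        exact ⟨g⁻¹ • z, hz, smul_inv_smul g z⟩
    rw [himg]
    exact hm.preimage_of_isOpenMap (continuous_const_smul _)
      (Homeomorph.smul (g⁻¹ : G)).isOpenMap
  have : IsMeagre (⋃ g ∈ t, (g • ·) '' ((· • y) '' U)) := by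
    rw [IsMeagre, compl_iUnion₂]
    exact (countable_bInter_mem htc).2 fun g _ => hmeagre g
  exact this.mono horb

theorem stmt2 {G X : Type*} [Group G] [TopologicalSpace G] [IsTopologicalGroup G] [PolishSpace G]
    [TopologicalSpace X] [PolishSpace X] [MulAction G X] [ContinuousSMul G X] (x : X)
    (h : ¬ IsMeagre (MulAction.orbit G x : Set X)) :
    ∃ O : Set X, IsOpen O ∧ O.Nonempty ∧
      ∀ V : Set X, IsOpen V → V.Nonempty → V ⊆ O →
        ∀ U ∈ nhds (1 : G), ∃ W : Set X, IsOpen W ∧ W.Nonempty ∧ W ⊆ V ∧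
          ∀ W₀ W₁ : Set X, IsOpen W₀ → IsOpen W₁ → W₀ ⊆ W → W₁ ⊆ W →
            W₀.Nonempty → W₁.Nonempty → ∃ g ∈ U, ((g • ·) '' W₀ ∩ W₁).Nonempty := by
  refine ⟨interior (closure (orbit G x)), isOpen_interior, ?_, ?_⟩
  · -- the interior of the closure of a non-meagre set is nonempty
    by_contra hne
    rw [not_nonempty_iff_eq_empty] at hne
    apply h
    rw [isMeagre_iff_countable_union_isNowhereDense]
    refine ⟨{closure (orbit G x)}, ?_, countable_singleton _, by simp [subset_closure]⟩
    rintro s rfl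
    rwa [IsNowhereDense, closure_closure]
  · intro V hVopen hVne hVsub U hU
    -- find an orbit point y in V
    obtain ⟨v, hv⟩ := hVne
    have hvclos : v ∈ closure (orbit G x) := interior_subset (hVsub hv)
    obtain ⟨y, hyV, hyorb⟩ := _root_.mem_closure_iff.1 hvclos V hVopen hv
    have horb_eq : orbit G y = orbit G x := by
      rw [MulAction.orbit_eq_iff]; exact hyorb
    have hy : ¬ IsMeagre (orbit G y : Set X) := horb_eq ▸ h
    -- shrink U
    obtain ⟨U₁, hU₁, hU₁split⟩ := exists_nhds_split_inv hU
    have hVy : {g : G | g • y ∈ V} ∈ nhds (1 : G) := by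
      have hc : Continuous fun g : G => g • y := continuous_id.smul continuous_const
      have : (fun g : G => g • y) ⁻¹' V ∈ nhds (1 : G) :=
        hc.continuousAt.preimage_mem_nhds (by simpa using hVopen.mem_nhds hyV)
      exact this
    set U₂ : Set G := U₁ ∩ {g : G | g • y ∈ V} with hU₂def
    have hU₂ : U₂ ∈ nhds (1 : G) := Filter.inter_mem hU₁ hVy
    set s : Set X := (· • y) '' U₂ with hsdef
    have hs_nm : ¬ IsMeagre s := aux_nonmeagre_smul y hy hU₂
    have hsV : s ⊆ V := by rintro z ⟨g, hg, rfl⟩; exact hg.2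
    -- W := V ∩ interior (closure s)
    refine ⟨V ∩ interior (closure s), hVopen.inter isOpen_interior, ?_, inter_subset_left, ?_⟩
    · -- nonempty: s must meet interior (closure s)
      by_contra hne
      rw [not_nonempty_iff_eq_empty] at hne
      apply hs_nm
      refine (aux_diff_interior_isMeagre (t := closure s) isClosed_closure).mono ?_
      intro z hz
      refine ⟨subset_closure hz, fun hzi => ?_⟩
      have : z ∈ V ∩ interior (closure s) := ⟨hsV hz, hzi⟩
      rw [hne] at this
      exact this
    · intro W₀ W₁ hW₀o hW₁o hW₀ hW₁ hW₀ne hW₁ne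
      -- each Wᵢ meets s
      have hmeet : ∀ (W' : Set X), IsOpen W' → W' ⊆ V ∩ interior (closure s) →
          W'.Nonempty → (W' ∩ s).Nonempty := by
        intro W' hW'o hW'sub ⟨p, hp⟩
        have : p ∈ closure s := interior_subset (hW'sub hp).2
        obtain ⟨q, hq1, hq2⟩ := _root_.mem_closure_iff.1 this W' hW'o hp
        exact ⟨q, hq1, hq2⟩
      obtain ⟨z₀, hz₀W, g₀, hg₀, hg₀y⟩ := hmeet W₀ hW₀o hW₀ hW₀ne
      obtain ⟨z₁, hz₁W, g₁, hg₁, hg₁y⟩ := hmeet W₁ hW₁o hW₁ hW₁ne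
      refine ⟨g₁ / g₀, hU₁split g₁ hg₁.1 g₀ hg₀.1, z₁, ⟨z₀, hz₀W, ?_⟩, hz₁W⟩
      simp only
      rw [← hg₀y, ← hg₁y, div_eq_mul_inv, mul_smul, inv_smul_smul]
end

section
/- Let G be a Polish group acting continuously on a Polish space X. Suppose there is a non-empty open set O ⊆ X such that for every non-empty open V ⊆ O and every neighbourhood U of the identity in G there is a non-empty open W ⊆ V such that the action of U on W is topologically transitive. Then X has a non-meagre G-orbit. -/
open Set Filter Topology TopologicalSpace Metric Pointwise


section KU

variable {α β : Type*} [TopologicalSpace α] [TopologicalSpace β]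

lemma not_isMeagre_of_isOpen_KU [BaireSpace α] {U : Set α} (hU : IsOpen U) (hne : U.Nonempty) :
    ¬ IsMeagre U := by
  intro hm
  have hd : Dense Uᶜ := dense_of_mem_residual hm
  obtain ⟨x, hx1, hx2⟩ := hd.inter_open_nonempty U hU hne
  exact hx2 hx1

lemma ku0 [SecondCountableTopology β] {U : Set (α × β)} (hUo : IsOpen U) (hUd : Dense U) :
    {x : α | Dense {y : β | (x, y) ∈ U}} ∈ residual α := by
  obtain ⟨b, hbc, hbne, hbasis⟩ := exists_countable_basis β
  have key : ∀ V ∈ b, IsOpen {x : α | ∃ y ∈ V, (x, y) ∈ U} ∧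
      (V.Nonempty → Dense {x : α | ∃ y ∈ V, (x, y) ∈ U}) := by
    intro V hV
    constructor
    · have : {x : α | ∃ y ∈ V, (x, y) ∈ U} = ⋃ y ∈ V, {x : α | (x, y) ∈ U} := by
        ext x; simp
      rw [this]
      exact isOpen_biUnion fun y _ => hUo.preimage (Continuous.prodMk_left y)
    · intro hVne
      rw [dense_iff_inter_open]
      intro A hA hAne
      have : (A ×ˢ V).Nonempty := hAne.prod hVne
      obtain ⟨p, hp⟩ := hUd.inter_open_nonempty (A ×ˢ V) (hA.prod (hbasis.isOpen hV)) this
      exact ⟨p.1, hp.1.1, p.2, hp.1.2, hp.2⟩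
  have hsub : (⋂ V ∈ {V ∈ b | V.Nonempty}, {x : α | ∃ y ∈ V, (x, y) ∈ U}) ⊆
      {x : α | Dense {y : β | (x, y) ∈ U}} := by
    intro x hx
    simp only [mem_iInter, mem_sep_iff] at hx
    simp only [mem_setOf_eq]
    rw [hbasis.dense_iff]
    intro V hV hVne
    obtain ⟨y, hyV, hyU⟩ := hx V ⟨hV, hVne⟩
    exact ⟨y, hyV, hyU⟩
  refine mem_of_superset ?_ hsub
  refine (countable_bInter_mem (hbc.mono (sep_subset _ _))).mpr ?_
  intro V hV
  exact residual_of_dense_open (key V hV.1).1 ((key V hV.1).2 hV.2)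

lemma ku1 [SecondCountableTopology β] {M : Set (α × β)} (hM : IsMeagre M) :
    {x : α | IsMeagre {y : β | (x, y) ∈ M}} ∈ residual α := by
  rw [IsMeagre, mem_residual_iff] at hM
  obtain ⟨S, hSo, hSd, hSc, hSsub⟩ := hM
  have key : ∀ s ∈ S, {x : α | Dense {y : β | (x, y) ∈ s}} ∈ residual α :=
    fun s hs => ku0 (hSo s hs) (hSd s hs)
  refine mem_of_superset ((countable_bInter_mem hSc).mpr key) ?_
  intro x hx
  simp only [mem_iInter] at hx
  simp only [mem_setOf_eq, IsMeagre, mem_residual_iff]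
  refine ⟨(fun s => {y : β | (x, y) ∈ s}) '' S, ?_, ?_, hSc.image _, ?_⟩
  · rintro t ⟨s, hs, rfl⟩
    exact (hSo s hs).preimage (Continuous.prodMk_right x)
  · rintro t ⟨s, hs, rfl⟩
    exact hx s hs
  · intro y hy
    rw [sInter_image] at hy
    simp only [mem_iInter, mem_setOf_eq] at hy
    exact fun hyM => hSsub (mem_sInter.mpr fun s hs => hy s hs) hyM

/-- Kuratowski-Ulam, one direction. -/
lemma ku_main [BaireSpace α] [BaireSpace β] [SecondCountableTopology β] {S : Set (α × β)}
    (hS : BaireMeasurableSet S) (hsec : ∀ x : α, IsMeagre {y : β | (x, y) ∈ S}) :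
    IsMeagre S := by
  obtain ⟨U, hUo, hSU⟩ := hS.residualEq_isOpen
  have hdiff : IsMeagre ((S \ U) ∪ (U \ S)) := by
    rw [IsMeagre]
    rw [eventuallyEq_set] at hSU
    filter_upwards [hSU] with p hp
    simp only [mem_compl_iff, mem_union, mem_diff, not_or, not_and, not_not]
    exact ⟨fun h => hp.mp h, fun h => hp.mpr h⟩
  rcases eq_empty_or_nonempty U with rfl | hUne
  · exact hdiff.mono (fun p hp => Or.inl ⟨hp, notMem_empty p⟩)
  · exfalso
    obtain ⟨⟨a, b⟩, hab⟩ := hUne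
    obtain ⟨A, B, hA, hB, haA, hbB, hABU⟩ := isOpen_prod_iff.mp hUo a b hab
    have h1 : {x : α | IsMeagre {y : β | (x, y) ∈ (S \ U) ∪ (U \ S)}} ∈ residual α := ku1 hdiff
    obtain ⟨x, hxA, hx⟩ : ∃ x ∈ A, IsMeagre {y : β | (x, y) ∈ (S \ U) ∪ (U \ S)} := by
      obtain ⟨x, hx1, hx2⟩ := (dense_of_mem_residual h1).inter_open_nonempty A hA ⟨a, haA⟩
      exact ⟨x, hx1, hx2⟩
    have hBsub : B ⊆ {y : β | (x, y) ∈ S} ∪ {y : β | (x, y) ∈ (S \ U) ∪ (U \ S)} := by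
      intro y hy
      by_cases hyS : (x, y) ∈ S
      · exact Or.inl hyS
      · exact Or.inr (Or.inr ⟨hABU (mk_mem_prod hxA hy), hyS⟩)
    have hun : IsMeagre ({y : β | (x, y) ∈ S} ∪ {y : β | (x, y) ∈ (S \ U) ∪ (U \ S)}) := by
      rw [IsMeagre, compl_union]
      exact inter_mem (hsec x) hx
    have : IsMeagre B := hun.mono hBsub
    exact not_isMeagre_of_isOpen_KU hB ⟨b, hbB⟩ this

end KU


section BP

variable {Z : Type*} [TopologicalSpace Z]

lemma isMeagre_iUnion'' {ι : Sort*} [Countable ι] {s : ι → Set Z} (h : ∀ i, IsMeagre (s i)) :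
    IsMeagre (⋃ i, s i) := by
  rw [IsMeagre, compl_iUnion]
  exact countable_iInter_mem.mpr h

lemma isMeagre_biUnion' {ι : Type*} {T : Set ι} (hT : T.Countable) {s : ι → Set Z}
    (h : ∀ i ∈ T, IsMeagre (s i)) : IsMeagre (⋃ i ∈ T, s i) := by
  rw [IsMeagre, compl_iUnion₂]
  exact (countable_bInter_mem hT).mpr h

lemma isMeagre_union {s t : Set Z} (hs : IsMeagre s) (ht : IsMeagre t) : IsMeagre (s ∪ t) := by
  rw [IsMeagre, compl_union]
  exact inter_mem hs ht

lemma not_isMeagre_of_isOpen' [BaireSpace Z] {U : Set Z} (hU : IsOpen U) (hne : U.Nonempty) :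
    ¬ IsMeagre U := by
  intro hm
  obtain ⟨x, hx1, hx2⟩ := (dense_of_mem_residual hm).inter_open_nonempty U hU hne
  exact hx2 hx1

lemma isMeagre_symmdiff {s u : Set Z} (h : s =ᶠ[residual Z] u) :
    IsMeagre ((s \ u) ∪ (u \ s)) := by
  rw [IsMeagre]
  rw [eventuallyEq_set] at h
  filter_upwards [h] with p hp
  simp only [mem_compl_iff, mem_union, mem_diff, not_or, not_and, not_not]
  exact ⟨fun h => hp.mp h, fun h => hp.mpr h⟩

/-- The set of points near which `S` is non-meagre. -/
def bigD (S : Set Z) : Set Z := {x | ∀ V : Set Z, IsOpen V → x ∈ V → ¬ IsMeagre (V ∩ S)}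

lemma isClosed_bigD (S : Set Z) : IsClosed (bigD S) := by
  rw [← isOpen_compl_iff, isOpen_iff_forall_mem_open]
  intro x hx
  simp only [bigD, mem_compl_iff, mem_setOf_eq, not_forall, not_not] at hx
  obtain ⟨V, hVo, hxV, hm⟩ := hx
  refine ⟨V, fun x' hx' hcon => hcon V hVo hx' hm, hVo, hxV⟩

lemma isMeagre_diff_bigD [SecondCountableTopology Z] (S : Set Z) : IsMeagre (S \ bigD S) := by
  obtain ⟨b, hbc, -, hbasis⟩ := exists_countable_basis Z
  have hsub : S \ bigD S ⊆ ⋃ V ∈ {V ∈ b | IsMeagre (V ∩ S)}, V ∩ S := by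
    rintro x ⟨hxS, hx⟩
    simp only [bigD, mem_setOf_eq, not_forall, not_not] at hx
    obtain ⟨V, hVo, hxV, hm⟩ := hx
    obtain ⟨V', hV'b, hxV', hV'V⟩ := hbasis.exists_subset_of_mem_open hxV hVo
    have : IsMeagre (V' ∩ S) := hm.mono (inter_subset_inter_left _ hV'V)
    exact mem_biUnion ⟨hV'b, this⟩ ⟨hxV', hxS⟩
  exact (isMeagre_biUnion' (hbc.mono (sep_subset _ _)) (fun V hV => hV.2)).mono hsub

lemma isMeagre_of_subset_bigD_diff [BaireSpace Z] {S B : Set Z} (hB : BaireMeasurableSet B)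
    (hsub : B ⊆ bigD S \ S) : IsMeagre B := by
  by_contra hnm
  obtain ⟨U, hUo, hBU⟩ := hB.residualEq_isOpen
  have hM : IsMeagre ((B \ U) ∪ (U \ B)) := isMeagre_symmdiff hBU
  have hUne : U.Nonempty := by
    rcases eq_empty_or_nonempty U with rfl | h
    · exact absurd (hM.mono (fun p hp => Or.inl ⟨hp, notMem_empty p⟩)) hnm
    · exact h
  have hnsub : ¬ (U ⊆ (B \ U) ∪ (U \ B)) :=
    fun hs => not_isMeagre_of_isOpen' hUo hUne (hM.mono hs)
  obtain ⟨x, hxU, hxM⟩ := not_subset.mp hnsub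
  have hxB : x ∈ B := by
    by_contra hc
    exact hxM (Or.inr ⟨hxU, hc⟩)
  have hUSm : IsMeagre (U ∩ S) := by
    refine hM.mono ?_
    rintro p ⟨hpU, hpS⟩
    have hpB : p ∉ B := fun hc => (hsub hc).2 hpS
    exact Or.inr ⟨hpU, hpB⟩
  exact (hsub hxB).1 U hUo hxU hUSm

/-! ### Cylinders -/

def cylL (l : List ℕ) : Set (ℕ → ℕ) := {a | ∀ i < l.length, a i = l.getD i 0}

lemma cylL_nil : cylL ([] : List ℕ) = univ := by
  ext a; simp [cylL]

lemma cylL_append_subset (l : List ℕ) (n : ℕ) : cylL (l ++ [n]) ⊆ cylL l := by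
  intro a ha i hi
  rw [ha i (by simp; omega), List.getD_append _ _ _ _ hi]

lemma cylL_take_subset (l : List ℕ) (k : ℕ) : cylL l ⊆ cylL (l.take k) := by
  intro a ha i hi
  rw [List.length_take] at hi
  have h2 : i < l.length := lt_of_lt_of_le hi (min_le_right _ _)
  have h3 : i < (l.take k).length := by rw [List.length_take]; exact hi
  rw [ha i h2, List.getD_eq_getElem _ _ h2, List.getD_eq_getElem _ _ h3]
  simp [List.getElem_take]

lemma cylL_eq_iUnion (l : List ℕ) : cylL l = ⋃ n, cylL (l ++ [n]) := by
  ext a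
  constructor
  · intro ha
    refine mem_iUnion.mpr ⟨a l.length, fun i hi => ?_⟩
    rw [List.length_append, List.length_singleton] at hi
    rcases lt_or_eq_of_le (Nat.lt_succ_iff.mp hi) with h | h
    · rw [List.getD_append _ _ _ _ h, ha i h]
    · subst h
      rw [List.getD_append_right _ _ _ _ le_rfl]
      simp
  · rintro ha
    obtain ⟨n, hn⟩ := mem_iUnion.mp ha
    exact cylL_append_subset l n hn

end BP

section Analytic

variable {Z : Type*} [MetricSpace Z] [SecondCountableTopology Z] [BaireSpace Z]

theorem baireMeasurableSet_range_of_continuous {f : (ℕ → ℕ) → Z} (hf : Continuous f) :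
    BaireMeasurableSet (range f) := by
  classical
  set A : List ℕ → Set Z := fun l => f '' cylL l with hA
  set P : List ℕ → Set Z := fun l => bigD (A l) ∩ closure (A l) with hP
  set H : List ℕ → Set Z := fun l => ⋂ k ∈ Finset.range (l.length + 1), P (l.take k) with hH
  have hPc : ∀ l, IsClosed (P l) := fun l => (isClosed_bigD _).inter isClosed_closure
  have hHc : ∀ l, IsClosed (H l) := fun l => isClosed_biInter (fun k _ => hPc _)
  have hHP : ∀ l, H l ⊆ P l := by
    intro l x hx
    simp only [hH, mem_iInter, Finset.mem_range] at hx
    have := hx l.length (Nat.lt_succ_self _)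
    rwa [List.take_length] at this
  have hHmono : ∀ l n, H (l ++ [n]) ⊆ H l := by
    intro l n x hx
    simp only [hH, mem_iInter, Finset.mem_range] at hx ⊢
    intro k hk
    have hk' : k < (l ++ [n]).length + 1 := by simp; omega
    have := hx k hk'
    rwa [List.take_append_of_le_length (by omega)] at this
  have hm1 : ∀ l, IsMeagre (A l \ H l) := by
    intro l
    have hsub : A l \ H l ⊆
        ⋃ k ∈ (↑(Finset.range (l.length + 1)) : Set ℕ), (A (l.take k) \ bigD (A (l.take k))) := by
      rintro x ⟨hxA, hxH⟩
      simp only [hH, mem_iInter, Finset.mem_range, not_forall] at hxH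
      obtain ⟨k, hk, hxP⟩ := hxH
      have hxAk : x ∈ A (l.take k) := by
        obtain ⟨a, ha, rfl⟩ := hxA
        exact ⟨a, cylL_take_subset l k ha, rfl⟩
      refine mem_biUnion (by simpa using hk) ⟨hxAk, fun hD => hxP ⟨hD, subset_closure hxAk⟩⟩
    exact (isMeagre_biUnion' (Finset.range (l.length + 1)).countable_toSet
      (fun k _ => isMeagre_diff_bigD _)).mono hsub
  set Bs : List ℕ → Set Z := fun l => H l \ ⋃ n, H (l ++ [n]) with hBs
  have hAsplit : ∀ l, A l = ⋃ n, A (l ++ [n]) := by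
    intro l
    rw [hA]
    simp only
    rw [cylL_eq_iUnion l, image_iUnion]
  set Mb : Set Z := ⋃ p : List ℕ × ℕ, (A (p.1 ++ [p.2]) \ H (p.1 ++ [p.2])) with hMb
  have hMbm : IsMeagre Mb := isMeagre_iUnion'' (fun p => hm1 _)
  have hHbm : ∀ l, BaireMeasurableSet (H l) := fun l =>
    ((hHc l).isOpen_compl.baireMeasurableSet).of_compl
  have hBsm : ∀ l, IsMeagre (Bs l) := by
    intro l
    have hBsBM : BaireMeasurableSet (Bs l) :=
      (hHbm l).diff (BaireMeasurableSet.iUnion (fun n => hHbm _))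
    have key : Bs l \ Mb ⊆ bigD (A l) \ A l := by
      rintro x ⟨hxB, hxM⟩
      refine ⟨(hHP l hxB.1).1, fun hxA => ?_⟩
      rw [hAsplit l] at hxA
      obtain ⟨n, hn⟩ := mem_iUnion.mp hxA
      have hnH : x ∉ H (l ++ [n]) := fun hc => hxB.2 (mem_iUnion.mpr ⟨n, hc⟩)
      exact hxM (mem_iUnion.mpr ⟨(l, n), ⟨hn, hnH⟩⟩)
    have hm : IsMeagre (Bs l \ Mb) :=
      isMeagre_of_subset_bigD_diff (hBsBM.diff hMbm.baireMeasurableSet) key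
    exact (isMeagre_union hm hMbm).mono (fun x hx => by
      by_cases hxM : x ∈ Mb
      · exact Or.inr hxM
      · exact Or.inl ⟨hx, hxM⟩)
  set Mstar : Set Z := (Mb ∪ ⋃ l : List ℕ, Bs l) ∪ (A [] \ H []) with hMstar
  have hMsm : IsMeagre Mstar :=
    isMeagre_union (isMeagre_union hMbm (isMeagre_iUnion'' hBsm)) (hm1 [])
  have hrange : range f = A [] := by rw [hA]; simp only; rw [cylL_nil, image_univ]
  have hsub2 : H [] \ Mstar ⊆ range f := by
    rintro z ⟨hzH, hzM⟩
    have hnotB : ∀ l, z ∈ H l → ∃ n, z ∈ H (l ++ [n]) := by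
      intro l hl
      by_contra hc
      push_neg at hc
      have : z ∈ Bs l := ⟨hl, by simpa using hc⟩
      exact hzM (Or.inl (Or.inr (mem_iUnion.mpr ⟨l, this⟩)))
    let T := {l : List ℕ // z ∈ H l}
    let step : T → T := fun t => ⟨t.1 ++ [(hnotB t.1 t.2).choose], (hnotB t.1 t.2).choose_spec⟩
    let seq : ℕ → T := fun k => step^[k] ⟨[], hzH⟩
    have hseq_succ : ∀ k, ∃ n, (seq (k + 1)).1 = (seq k).1 ++ [n] := by
      intro k
      have : seq (k + 1) = step (seq k) := Function.iterate_succ_apply' _ _ _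
      rw [this]
      exact ⟨_, rfl⟩
    have hseq_len : ∀ k, (seq k).1.length = k := by
      intro k
      induction k with
      | zero => rfl
      | succ k ih =>
        obtain ⟨n, hn⟩ := hseq_succ k
        rw [hn]
        simp [ih]
    set α : ℕ → ℕ := fun i => (seq (i + 1)).1.getD i 0 with hα
    have hstab : ∀ k i, i < k → (seq k).1.getD i 0 = α i := by
      intro k
      induction k with
      | zero => omega
      | succ k ih =>
        intro i hi
        rcases Nat.lt_or_ge i k with h | h
        · obtain ⟨n, hn⟩ := hseq_succ k
          rw [hn, List.getD_append _ _ _ _ (by rw [hseq_len]; omega), ih i h]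
        · have : i = k := by omega
          subst this
          rfl
    have hmem : ∀ k, z ∈ closure (A (seq k).1) := fun k => (hHP _ (seq k).2).2
    have happ : ∀ k : ℕ, ∃ a ∈ cylL (seq k).1, dist (f a) z < 1 / (k + 1) := by
      intro k
      have h1 := Metric.mem_closure_iff.mp (hmem k) (1 / (k + 1)) (by positivity)
      obtain ⟨w, hw, hd⟩ := h1
      obtain ⟨a, ha, rfl⟩ := hw
      exact ⟨a, ha, by rwa [dist_comm]⟩
    choose a ha hd using happ
    have hconv : Tendsto a atTop (𝓝 α) := by
      rw [tendsto_pi_nhds]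
      intro i
      refine Tendsto.congr' ?_ (tendsto_const_nhds (x := α i))
      filter_upwards [eventually_ge_atTop (i + 1)] with k hk
      have h1 : a k i = (seq k).1.getD i 0 := ha k i (by rw [hseq_len]; omega)
      rw [h1, hstab k i (by omega)]
    have h1 : Tendsto (fun k => f (a k)) atTop (𝓝 (f α)) := (hf.tendsto α).comp hconv
    have h2 : Tendsto (fun k => f (a k)) atTop (𝓝 z) := by
      rw [tendsto_iff_dist_tendsto_zero]
      refine squeeze_zero (fun k => dist_nonneg) (fun k => le_of_lt (hd k)) ?_
      exact tendsto_one_div_add_atTop_nhds_zero_nat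
    exact ⟨α, tendsto_nhds_unique h1 h2⟩
  have heq : range f =ᶠ[residual Z] H [] := by
    rw [eventuallyEq_set]
    filter_upwards [hMsm] with x hx
    constructor
    · intro hxr
      rw [hrange] at hxr
      by_contra hc
      exact hx (Or.inr ⟨hxr, hc⟩)
    · intro hxH
      exact hsub2 ⟨hxH, hx⟩
  exact (((hHc []).isOpen_compl.baireMeasurableSet).of_compl).congr heq.symm

end Analytic


theorem fusion_thm {G X : Type*} [Group G] [TopologicalSpace G] [IsTopologicalGroup G] [PolishSpace G]
    [TopologicalSpace X] [PolishSpace X] [MulAction G X] [ContinuousSMul G X]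
    (O : Set X) (hO : IsOpen O) (hne : O.Nonempty)
    (h : ∀ V : Set X, IsOpen V → V.Nonempty → V ⊆ O →
        ∀ U ∈ nhds (1 : G), ∃ W : Set X, IsOpen W ∧ W.Nonempty ∧ W ⊆ V ∧
          ∀ W₀ W₁ : Set X, IsOpen W₀ → IsOpen W₁ → W₀ ⊆ W → W₁ ⊆ W →
            W₀.Nonempty → W₁.Nonempty → ∃ g ∈ U, ((g • ·) '' W₀ ∩ W₁).Nonempty)
    (R : Set (X × X)) (hR : R ∈ residual (X × X)) :
    ∃ x y : X, x ∈ O ∧ y ∈ O ∧ y ∈ MulAction.orbit G x ∧ (x, y) ∈ R := by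
  letI := upgradeIsCompletelyMetrizable G
  letI := upgradeIsCompletelyMetrizable X
  rw [mem_residual_iff] at hR
  obtain ⟨S, hSo, hSd, hSc, hSR⟩ := hR
  obtain ⟨D, hDo, hDd, hDR⟩ : ∃ D : ℕ → Set (X × X), (∀ n, IsOpen (D n)) ∧ (∀ n, Dense (D n)) ∧
      (⋂ n, D n) ⊆ R := by
    rcases eq_empty_or_nonempty S with rfl | hSne
    · exact ⟨fun _ => univ, fun _ => isOpen_univ, fun _ => dense_univ,
        fun p _ => hSR (by simp)⟩
    · obtain ⟨g, hg⟩ := hSc.exists_eq_range hSne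
      refine ⟨g, fun n => hSo _ (hg ▸ mem_range_self n), fun n => hSd _ (hg ▸ mem_range_self n),
        fun p hp => hSR ?_⟩
      rw [hg, sInter_range]
      exact hp
  -- the inductive step
  have step : ∀ (b : G) (B : Set X), IsOpen B → B.Nonempty → B ⊆ O →
      ∀ ε : ℝ, 0 < ε → ∀ Dn : Set (X × X), IsOpen Dn → Dense Dn →
      ∃ (b' : G) (B' : Set X) (c d : X), IsOpen B' ∧ B'.Nonempty ∧ B' ⊆ O ∧
        closure B' ⊆ B ∧ closure (b'⁻¹ • B') ⊆ b⁻¹ • B ∧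
        B' ⊆ Metric.ball c ε ∧ b'⁻¹ • B' ⊆ Metric.ball d ε ∧
        dist b' b ≤ ε ∧ (b'⁻¹ • B') ×ˢ B' ⊆ Dn := by
    intro b B hBo hBne hBO ε hε Dn hDno hDnd
    have hU : (fun g : G => g * b) ⁻¹' Metric.ball b ε ∈ nhds (1 : G) := by
      apply ContinuousAt.preimage_mem_nhds (continuous_mul_right b).continuousAt
      simpa using Metric.ball_mem_nhds b hε
    obtain ⟨W, hWo, hWne, hWB, htr⟩ := h B hBo hBne hBO _ hU
    have hA1o : IsOpen (b⁻¹ • W) := hWo.smul _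
    have hA1ne : (b⁻¹ • W).Nonempty := hWne.smul_set
    have hrect : ((((b⁻¹ • W) ×ˢ W) ∩ Dn)).Nonempty :=
      hDnd.inter_open_nonempty _ (hA1o.prod hWo) (hA1ne.prod hWne)
    obtain ⟨⟨p0, q0⟩, hpq⟩ := hrect
    obtain ⟨P, Q, hPo, hQo, hp0, hq0, hPQ⟩ :=
      isOpen_prod_iff.mp ((hA1o.prod hWo).inter hDno) p0 q0 hpq
    have hPsub : P ⊆ b⁻¹ • W := fun p hp => ((hPQ (mk_mem_prod hp hq0)).1).1
    have hQsub : Q ⊆ W := fun q hq => ((hPQ (mk_mem_prod hp0 hq)).1).2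
    have hPQD : P ×ˢ Q ⊆ Dn := fun pq hpq' => (hPQ hpq').2
    have hbPW : b • P ⊆ W := by
      have := Set.smul_set_mono (a := b) hPsub
      rwa [smul_inv_smul] at this
    obtain ⟨g, hgU, y, hy⟩ := htr (b • P) Q (hPo.smul _) hQo hbPW hQsub
      (Set.Nonempty.smul_set ⟨p0, hp0⟩) ⟨q0, hq0⟩
    set b' := g * b with hb'
    have hyP : y ∈ b' • P ∩ Q := by
      obtain ⟨⟨w, hw, rfl⟩, hyQ⟩ := hy
      obtain ⟨p, hp, rfl⟩ := hw
      exact ⟨⟨p, hp, by simp [hb', mul_smul]⟩, hyQ⟩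
    have hYo : IsOpen (b' • P ∩ Q) := (hPo.smul _).inter hQo
    set x := b'⁻¹ • y with hx
    have hcont : ContinuousAt (fun z : X => b'⁻¹ • z) y := (continuous_const_smul _).continuousAt
    rw [Metric.continuousAt_iff] at hcont
    obtain ⟨δ₁, hδ₁, hball1⟩ := hcont (ε / 2) (by positivity)
    obtain ⟨δ₂, hδ₂, hball2⟩ := Metric.isOpen_iff.mp hYo y hyP
    set r := min (min δ₁ δ₂) ε / 2 with hr
    have hrpos : 0 < r := by
      have : 0 < min (min δ₁ δ₂) ε := lt_min (lt_min hδ₁ hδ₂) hε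
      positivity
    have hrδ₁ : r ≤ δ₁ := by
      rw [hr]
      have : min (min δ₁ δ₂) ε ≤ δ₁ := le_trans (min_le_left _ _) (min_le_left _ _)
      linarith
    have hrδ₂ : r < δ₂ := by
      rw [hr]
      have : min (min δ₁ δ₂) ε ≤ δ₂ := le_trans (min_le_left _ _) (min_le_right _ _)
      linarith
    have hrε : r ≤ ε := by
      rw [hr]
      have : min (min δ₁ δ₂) ε ≤ ε := min_le_right _ _
      linarith
    have hBY : Metric.ball y r ⊆ b' • P ∩ Q := le_trans (Metric.ball_subset_ball hrδ₂.le)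
      (le_of_eq rfl) |>.trans hball2
    have hclBY : closure (Metric.ball y r) ⊆ b' • P ∩ Q :=
      le_trans closure_ball_subset_closedBall ((Metric.closedBall_subset_ball hrδ₂).trans hball2)
    have hApart : b'⁻¹ • Metric.ball y r ⊆ P := by
      have h1 : b'⁻¹ • Metric.ball y r ⊆ b'⁻¹ • (b' • P) :=
        Set.smul_set_mono (hBY.trans inter_subset_left)
      rwa [inv_smul_smul] at h1
    refine ⟨b', Metric.ball y r, y, x, Metric.isOpen_ball, ⟨y, Metric.mem_ball_self hrpos⟩,
      ?_, ?_, ?_, ?_, ?_, ?_, ?_⟩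
    · -- ⊆ O
      exact (hBY.trans inter_subset_right).trans (hQsub.trans (hWB.trans hBO))
    · -- closure ⊆ B
      exact (hclBY.trans inter_subset_right).trans (hQsub.trans hWB)
    · -- closure (b'⁻¹ • ball) ⊆ b⁻¹ • B
      have h1 : closure (b'⁻¹ • Metric.ball y r) ⊆ b'⁻¹ • closure (Metric.ball y r) := by
        apply closure_minimal (Set.smul_set_mono subset_closure)
        exact isClosed_closure.smul _
      refine h1.trans ?_
      have h2 : b'⁻¹ • closure (Metric.ball y r) ⊆ P := by
        have := Set.smul_set_mono (a := b'⁻¹) (hclBY.trans inter_subset_left)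
        rwa [inv_smul_smul] at this
      exact h2.trans (hPsub.trans (Set.smul_set_mono hWB))
    · exact Metric.ball_subset_ball hrε
    · -- b'⁻¹ • ball ⊆ ball x ε
      rintro z ⟨w, hw, rfl⟩
      have : dist w y < δ₁ := lt_of_lt_of_le (Metric.mem_ball.mp hw) hrδ₁
      have := hball1 this
      rw [Metric.mem_ball]
      calc dist (b'⁻¹ • w) x = dist (b'⁻¹ • w) (b'⁻¹ • y) := by rw [hx]
      _ < ε / 2 := this
      _ ≤ ε := by linarith
    · -- dist b' b ≤ ε
      have : g * b ∈ Metric.ball b ε := hgU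
      rw [Metric.mem_ball] at this
      exact le_of_lt this
    · -- ⊆ Dn
      exact subset_trans (Set.prod_mono hApart (hBY.trans inter_subset_right)) hPQD
  -- the recursive construction
  have hstep' : ∀ (n : ℕ) (p : {p : G × Set X // IsOpen p.2 ∧ p.2.Nonempty ∧ p.2 ⊆ O}),
      ∃ q : {p : G × Set X // IsOpen p.2 ∧ p.2.Nonempty ∧ p.2 ⊆ O},
      closure q.1.2 ⊆ p.1.2 ∧ closure (q.1.1⁻¹ • q.1.2) ⊆ p.1.1⁻¹ • p.1.2 ∧
      (∃ c, q.1.2 ⊆ Metric.ball c ((1/2 : ℝ)^n)) ∧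
      (∃ d, q.1.1⁻¹ • q.1.2 ⊆ Metric.ball d ((1/2 : ℝ)^n)) ∧
      dist q.1.1 p.1.1 ≤ (1/2 : ℝ)^n ∧ (q.1.1⁻¹ • q.1.2) ×ˢ q.1.2 ⊆ D n := by
    intro n p
    obtain ⟨b', B', c, d, h1, h2, h3, h4, h5, h6, h7, h8, h9⟩ :=
      step p.1.1 p.1.2 p.2.1 p.2.2.1 p.2.2.2 ((1/2 : ℝ)^n) (by positivity) (D n) (hDo n) (hDd n)
    exact ⟨⟨(b', B'), h1, h2, h3⟩, h4, h5, ⟨c, h6⟩, ⟨d, h7⟩, h8, h9⟩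
  choose nxt hn1 hn2 hn3 hn4 hn5 hn6 using hstep'
  let seq : ℕ → {p : G × Set X // IsOpen p.2 ∧ p.2.Nonempty ∧ p.2 ⊆ O} :=
    fun n => Nat.rec ⟨((1 : G), O), hO, hne, subset_rfl⟩ (fun n p => nxt n p) n
  set bs : ℕ → G := fun n => (seq n).1.1 with hbs
  set Bset : ℕ → Set X := fun n => (seq n).1.2 with hBset
  set Aset : ℕ → Set X := fun n => (bs n)⁻¹ • Bset n with hAset
  have c1 : ∀ n, closure (Bset (n+1)) ⊆ Bset n := fun n => hn1 n (seq n)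
  have c2 : ∀ n, closure (Aset (n+1)) ⊆ Aset n := fun n => hn2 n (seq n)
  have c3 : ∀ n, ∃ c, Bset (n+1) ⊆ Metric.ball c ((1/2 : ℝ)^n) := fun n => hn3 n (seq n)
  have c4 : ∀ n, ∃ d, Aset (n+1) ⊆ Metric.ball d ((1/2 : ℝ)^n) := fun n => hn4 n (seq n)
  have c5 : ∀ n, dist (bs (n+1)) (bs n) ≤ (1/2 : ℝ)^n := fun n => hn5 n (seq n)
  have c6 : ∀ n, (Aset (n+1)) ×ˢ (Bset (n+1)) ⊆ D n := fun n => hn6 n (seq n)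
  choose cB hcB using c3
  choose cA hcA using c4
  have hBmono : ∀ n, Bset (n+1) ⊆ Bset n := fun n => subset_closure.trans (c1 n)
  have hAmono : ∀ n, Aset (n+1) ⊆ Aset n := fun n => subset_closure.trans (c2 n)
  have hBchain : ∀ m n, n ≤ m → Bset m ⊆ Bset n := by
    intro m n hnm
    induction m with
    | zero => rw [Nat.le_zero.mp hnm]
    | succ m ih =>
      rcases Nat.lt_or_ge n (m+1) with h' | h'
      · exact (hBmono m).trans (ih (by omega))
      · rw [Nat.le_antisymm hnm h']
  have hAchain : ∀ m n, n ≤ m → Aset m ⊆ Aset n := by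
    intro m n hnm
    induction m with
    | zero => rw [Nat.le_zero.mp hnm]
    | succ m ih =>
      rcases Nat.lt_or_ge n (m+1) with h' | h'
      · exact (hAmono m).trans (ih (by omega))
      · rw [Nat.le_antisymm hnm h']
  -- convergence of group elements
  have hbcauchy : CauchySeq bs := by
    apply cauchySeq_of_le_geometric (1/2 : ℝ) 1 (by norm_num)
    intro n
    rw [dist_comm, one_mul]
    exact c5 n
  obtain ⟨hlim, hbl⟩ := cauchySeq_tendsto_of_complete hbcauchy
  -- choose points
  have hBne' : ∀ n, (Bset n).Nonempty := fun n => (seq n).2.2.1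
  have hAne' : ∀ n, (Aset n).Nonempty := fun n => (hBne' n).smul_set
  choose ys hys using hBne'
  choose xs hxs using hAne'
  have hdiam : ∀ (z w : X) (n : ℕ), z ∈ Bset (n+1) → w ∈ Bset (n+1) →
      dist z w ≤ 2 * (1/2 : ℝ)^n := by
    intro z w n hz hw
    have h1 := Metric.mem_ball.mp (hcB n hz)
    have h2 := Metric.mem_ball.mp (hcB n hw)
    calc dist z w ≤ dist z (cB n) + dist (cB n) w := dist_triangle _ _ _
    _ ≤ (1/2 : ℝ)^n + (1/2 : ℝ)^n := by rw [dist_comm (cB n) w]; exact add_le_add h1.le h2.le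
    _ = 2 * (1/2 : ℝ)^n := by ring
  have hdiamA : ∀ (z w : X) (n : ℕ), z ∈ Aset (n+1) → w ∈ Aset (n+1) →
      dist z w ≤ 2 * (1/2 : ℝ)^n := by
    intro z w n hz hw
    have h1 := Metric.mem_ball.mp (hcA n hz)
    have h2 := Metric.mem_ball.mp (hcA n hw)
    calc dist z w ≤ dist z (cA n) + dist (cA n) w := dist_triangle _ _ _
    _ ≤ (1/2 : ℝ)^n + (1/2 : ℝ)^n := by rw [dist_comm (cA n) w]; exact add_le_add h1.le h2.le
    _ = 2 * (1/2 : ℝ)^n := by ring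
  have htend0 : Tendsto (fun n : ℕ => 2 * (1/2 : ℝ)^n) atTop (𝓝 0) := by
    have := tendsto_pow_atTop_nhds_zero_of_lt_one (by norm_num : (0:ℝ) ≤ 1/2) (by norm_num)
    simpa using this.const_mul 2
  have hycauchy : CauchySeq (fun n => ys (n+1)) := by
    apply cauchySeq_of_le_tendsto_0 (fun n => 2 * (1/2 : ℝ)^n) _ htend0
    intro m n N hm hn
    exact hdiam _ _ N (hBchain (m+1) (N+1) (by omega) (hys (m+1)))
      (hBchain (n+1) (N+1) (by omega) (hys (n+1)))
  have hxcauchy : CauchySeq (fun n => xs (n+1)) := by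
    apply cauchySeq_of_le_tendsto_0 (fun n => 2 * (1/2 : ℝ)^n) _ htend0
    intro m n N hm hn
    exact hdiamA _ _ N (hAchain (m+1) (N+1) (by omega) (hxs (m+1)))
      (hAchain (n+1) (N+1) (by omega) (hxs (n+1)))
  obtain ⟨y, hyl⟩ := cauchySeq_tendsto_of_complete hycauchy
  obtain ⟨x, hxl⟩ := cauchySeq_tendsto_of_complete hxcauchy
  -- x, y in all the sets
  have hyB : ∀ n, y ∈ Bset n := by
    intro n
    have h1 : y ∈ closure (Bset (n+1)) := by
      apply mem_closure_of_tendsto hyl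
      filter_upwards [eventually_ge_atTop n] with m hm
      exact hBchain (m+1) (n+1) (by omega) (hys (m+1))
    exact c1 n h1
  have hxA : ∀ n, x ∈ Aset n := by
    intro n
    have h1 : x ∈ closure (Aset (n+1)) := by
      apply mem_closure_of_tendsto hxl
      filter_upwards [eventually_ge_atTop n] with m hm
      exact hAchain (m+1) (n+1) (by omega) (hxs (m+1))
    exact c2 n h1
  -- y = hlim • x
  have hbx : ∀ n, bs n • x ∈ Bset n := by
    intro n
    have := hxA n
    rw [hAset] at this
    rwa [Set.mem_smul_set_iff_inv_smul_mem, inv_inv] at this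
  have ht1 : Tendsto (fun n => bs (n+1) • x) atTop (𝓝 (hlim • x)) :=
    Tendsto.smul (hbl.comp (tendsto_add_atTop_nat 1)) tendsto_const_nhds
  have ht2 : Tendsto (fun n => bs (n+1) • x) atTop (𝓝 y) := by
    rw [tendsto_iff_dist_tendsto_zero]
    apply squeeze_zero (fun n => dist_nonneg)
      (fun n => hdiam _ _ n (hbx (n+1)) (hyB (n+1))) htend0
  have hxy : hlim • x = y := tendsto_nhds_unique ht1 ht2
  have hB0 : Bset 0 = O := rfl
  have hA0 : Aset 0 = (1 : G)⁻¹ • O := rfl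
  refine ⟨x, y, ?_, ?_, ?_, ?_⟩
  · have := hxA 0
    rw [hA0, Set.mem_smul_set_iff_inv_smul_mem] at this
    simpa using this
  · exact hB0 ▸ hyB 0
  · rw [← hxy]
    exact MulAction.mem_orbit x hlim
  · apply hDR
    rw [mem_iInter]
    intro n
    exact c6 n (Set.mk_mem_prod (hxA (n+1)) (hyB (n+1)))

theorem stmt3 {G X : Type*} [Group G] [TopologicalSpace G] [IsTopologicalGroup G] [PolishSpace G]
    [TopologicalSpace X] [PolishSpace X] [MulAction G X] [ContinuousSMul G X]
    (O : Set X) (hO : IsOpen O) (hne : O.Nonempty)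
    (h : ∀ V : Set X, IsOpen V → V.Nonempty → V ⊆ O →
        ∀ U ∈ nhds (1 : G), ∃ W : Set X, IsOpen W ∧ W.Nonempty ∧ W ⊆ V ∧
          ∀ W₀ W₁ : Set X, IsOpen W₀ → IsOpen W₁ → W₀ ⊆ W → W₁ ⊆ W →
            W₀.Nonempty → W₁.Nonempty → ∃ g ∈ U, ((g • ·) '' W₀ ∩ W₁).Nonempty) :
    ∃ x : X, ¬ IsMeagre (MulAction.orbit G x : Set X) := by
  by_contra hcon
  push_neg at hcon
  obtain ⟨x0, hx0⟩ := hne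
  letI := upgradeIsCompletelyMetrizable X
  letI := upgradeIsCompletelyMetrizable G
  set E : Set (X × X) := {p : X × X | p.2 ∈ MulAction.orbit G p.1} with hE
  have hnGX : Nonempty (G × X) := ⟨(1, x0)⟩
  obtain ⟨σ, hσc, hσs⟩ := PolishSpace.exists_nat_nat_continuous_surjective (G × X)
  set F : (ℕ → ℕ) → X × X := fun a => ((σ a).2, (σ a).1 • (σ a).2) with hF
  have hFc : Continuous F := by
    refine Continuous.prodMk (continuous_snd.comp hσc) ?_
    exact (continuous_fst.comp hσc).smul (continuous_snd.comp hσc)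
  have hFr : range F = E := by
    ext p
    constructor
    · rintro ⟨a, rfl⟩
      exact MulAction.mem_orbit _ _
    · intro hp
      obtain ⟨g, hg⟩ := MulAction.mem_orbit_iff.mp hp
      obtain ⟨a, ha⟩ := hσs (g, p.1)
      refine ⟨a, ?_⟩
      rw [hF]
      simp only [ha]
      rw [hg]
  have hEBM : BaireMeasurableSet E := hFr ▸ baireMeasurableSet_range_of_continuous hFc
  have hBM : BaireMeasurableSet (E ∩ O ×ˢ O) := hEBM.inter (hO.prod hO).baireMeasurableSet
  have hsec : ∀ x : X, IsMeagre {y : X | (x, y) ∈ E ∩ O ×ˢ O} :=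
    fun x => (hcon x).mono (fun y hy => hy.1)
  have hmeag : IsMeagre (E ∩ O ×ˢ O) := ku_main hBM hsec
  obtain ⟨x, y, hxO, hyO, horb, hRmem⟩ := fusion_thm O hO ⟨x0, hx0⟩ h _ hmeag
  exact hRmem ⟨horb, Set.mk_mem_prod hxO hyO⟩
end

section
/- Let f : X → Y be a surjective, continuous, open map between Polish spaces, and let A ⊆ X have the Baire property. Then A is comeagre in X if and only if for comeagrely many y ∈ Y, the set A ∩ f⁻¹(y) is comeagre in the fibre f⁻¹(y) (with its subspace topology). -/
open Set Filter TopologicalSpace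

/-- A Polish space is a Baire space. -/
lemma polish_baireSpace (Z : Type*) [TopologicalSpace Z] [PolishSpace Z] : BaireSpace Z := by
  letI := upgradeIsCompletelyMetrizable Z
  infer_instance

/-- If `U` is open dense, then for comeagrely many `y` the trace of `U` on the fibre
`f ⁻¹' {y}` is dense in the fibre. -/
lemma fiber_dense {X Y : Type*} [TopologicalSpace X] [SecondCountableTopology X]
    [TopologicalSpace Y] (f : X → Y) (hc : Continuous f) (ho : IsOpenMap f)
    {U : Set X} (hU : IsOpen U) (hd : Dense U) :
    ∀ᶠ y in residual Y, Dense (Subtype.val ⁻¹' U : Set (f ⁻¹' {y})) := by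
  set B := countableBasis X with hB
  have key : ∀ V ∈ B, ((f '' V)ᶜ ∪ f '' (U ∩ V)) ∈ residual Y := by
    intro V hV
    have hVopen : IsOpen V := isOpen_of_mem_countableBasis hV
    set E := f '' (U ∩ V) with hE
    have hEopen : IsOpen E := ho _ (hU.inter hVopen)
    -- f '' V ⊆ closure E
    have hsub : f '' V ⊆ closure E := by
      rintro y ⟨x, hxV, rfl⟩
      rw [mem_closure_iff]
      intro o oo hyo
      obtain ⟨u, ⟨huV, huo⟩, huU⟩ :=
        hd.inter_open_nonempty _ (hVopen.inter (oo.preimage hc)) ⟨x, hxV, hyo⟩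
      exact ⟨f u, huo, ⟨u, ⟨huU, huV⟩, rfl⟩⟩
    -- the bad set is contained in `closure E \ E`, which is closed nowhere dense
    have hgood : (closure E \ E)ᶜ ∈ residual Y := by
      apply residual_of_dense_open
      · exact (isClosed_closure.inter hEopen.isClosed_compl).isOpen_compl
      · rw [← interior_eq_empty_iff_dense_compl]
        rw [eq_empty_iff_forall_notMem]
        intro z hz
        have hz' : z ∈ closure E \ E := interior_subset hz
        obtain ⟨w, hw1, hw2⟩ := (mem_closure_iff.mp hz'.1) _ isOpen_interior hz
        exact (interior_subset hw1).2 hw2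
    refine mem_of_superset hgood ?_
    intro z hz
    by_cases hzV : z ∈ f '' V
    · right
      by_contra hzE
      exact hz ⟨hsub hzV, hzE⟩
    · exact Or.inl hzV
  have := (eventually_countable_ball (countable_countableBasis X)).mpr
    (fun V hV => eventually_mem_set.mpr (key V hV))
  refine this.mono fun y hy => ?_
  rw [dense_iff_inter_open]
  rintro O hO ⟨⟨x, hx⟩, hxO⟩
  obtain ⟨W, hWopen, rfl⟩ := isOpen_induced_iff.mp hO
  obtain ⟨V, hVB, hxV, hVW⟩ :=
    (isBasis_countableBasis X).exists_subset_of_mem_open hxO hWopen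
  have hyV : y ∈ f '' V := ⟨x, hxV, hx⟩
  rcases hy V hVB with h | ⟨u, ⟨huU, huV⟩, hfu⟩
  · exact absurd hyV h
  · exact ⟨⟨u, by simp [hfu]⟩, hVW huV, huU⟩

/-- If `M` is meagre, then for comeagrely many `y` the trace of `M` on the fibre
`f ⁻¹' {y}` is meagre in the fibre. -/
lemma fiber_meagre {X Y : Type*} [TopologicalSpace X] [SecondCountableTopology X]
    [TopologicalSpace Y] (f : X → Y) (hc : Continuous f) (ho : IsOpenMap f)
    {M : Set X} (hM : IsMeagre M) :
    ∀ᶠ y in residual Y, IsMeagre (Subtype.val ⁻¹' M : Set (f ⁻¹' {y})) := by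
  obtain ⟨S, hnd, hcnt, hsub⟩ := isMeagre_iff_countable_union_isNowhereDense.mp hM
  have key : ∀ t ∈ S, ∀ᶠ y in residual Y,
      Dense (Subtype.val ⁻¹' (closure t)ᶜ : Set (f ⁻¹' {y})) := by
    intro t ht
    exact fiber_dense f hc ho isClosed_closure.isOpen_compl
      (interior_eq_empty_iff_dense_compl.mp (hnd t ht))
  refine ((eventually_countable_ball hcnt).mpr key).mono fun y hy => ?_
  rw [isMeagre_iff_countable_union_isNowhereDense]
  refine ⟨(fun t => (Subtype.val ⁻¹' closure t : Set (f ⁻¹' {y}))) '' S, ?_, hcnt.image _, ?_⟩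
  · rintro _ ⟨t, ht, rfl⟩
    have hcl : IsClosed (Subtype.val ⁻¹' closure t : Set (f ⁻¹' {y})) :=
      isClosed_closure.preimage continuous_subtype_val
    rw [hcl.isNowhereDense_iff, interior_eq_empty_iff_dense_compl, ← preimage_compl]
    exact hy t ht
  · intro x hx
    obtain ⟨t, ht, hxt⟩ := hsub hx
    exact ⟨_, ⟨t, ht, rfl⟩, subset_closure hxt⟩

theorem stmt4 {X Y : Type*} [TopologicalSpace X] [PolishSpace X]
    [TopologicalSpace Y] [PolishSpace Y]
    (f : X → Y) (hc : Continuous f) (ho : IsOpenMap f) (hs : Function.Surjective f)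
    (A : Set X) (hA : BaireMeasurableSet A) :
    IsMeagre Aᶜ ↔
      ∀ᶠ y in residual Y, IsMeagre ((Subtype.val ⁻¹' A : Set (f ⁻¹' {y}))ᶜ) := by
  constructor
  · intro h
    refine (fiber_meagre f hc ho h).mono fun y hy => ?_
    rwa [preimage_compl] at hy
  · intro h
    obtain ⟨U, hUo, hAU⟩ := hA.residualEq_isOpen
    have hiff : {x | x ∈ A ↔ x ∈ U} ∈ residual X := hAU.mono fun x hx => iff_of_eq hx
    have hMmeagre : IsMeagre {x | ¬(x ∈ A ↔ x ∈ U)} := by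
      rw [IsMeagre]
      convert hiff using 1
      ext x
      simp
    -- key claim : interior Uᶜ = ∅
    have hint : interior Uᶜ = ∅ := by
      rw [eq_empty_iff_forall_notMem]
      intro x₀ hx₀
      set V := interior Uᶜ with hV
      have hVU : V ⊆ Uᶜ := interior_subset
      haveI : BaireSpace Y := polish_baireSpace Y
      have hDres : {y | IsMeagre ((Subtype.val ⁻¹' A : Set (f ⁻¹' {y}))ᶜ)
          ∧ IsMeagre (Subtype.val ⁻¹' {x | ¬(x ∈ A ↔ x ∈ U)} : Set (f ⁻¹' {y}))} ∈ residual Y :=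
        (h.and (fiber_meagre f hc ho hMmeagre)).mono fun y hy => hy
      obtain ⟨y, hyV, hy1, hy2⟩ :=
        (dense_of_mem_residual hDres).inter_open_nonempty _ (ho V isOpen_interior) ⟨f x₀, Set.mem_image_of_mem f hx₀⟩
      obtain ⟨x, hxV, hxy⟩ := hyV
      haveI : PolishSpace (f ⁻¹' {y}) := (isClosed_singleton.preimage hc).polishSpace
      haveI : BaireSpace (f ⁻¹' {y}) := polish_baireSpace _
      set S := (Subtype.val ⁻¹' V : Set (f ⁻¹' {y})) with hS
      have hSopen : IsOpen S := isOpen_interior.preimage continuous_subtype_val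
      have hSsub : S ⊆ (Subtype.val ⁻¹' A : Set (f ⁻¹' {y}))ᶜ ∪
          (Subtype.val ⁻¹' {x | ¬(x ∈ A ↔ x ∈ U)} : Set (f ⁻¹' {y})) := by
        intro z hz
        by_cases hzA : (z : X) ∈ A
        · exact Or.inr fun hiff => hVU hz (hiff.mp hzA)
        · exact Or.inl hzA
      have hSme : IsMeagre S := by
        refine IsMeagre.mono hSsub ?_
        rw [IsMeagre, compl_union]
        exact inter_mem hy1 hy2
      have hp : (⟨x, show x ∈ f ⁻¹' {y} from hxy⟩ : f ⁻¹' {y}) ∈ S := hxV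
      obtain ⟨z, hz1, hz2⟩ :=
        (dense_of_mem_residual hSme).inter_open_nonempty _ hSopen ⟨_, hp⟩
      exact hz2 hz1
    -- conclude
    have hUdense : Dense U := by
      have := interior_eq_empty_iff_dense_compl.mp hint
      rwa [compl_compl] at this
    have hUres : U ∈ residual X := residual_of_dense_open hUo hUdense
    rw [IsMeagre, compl_compl]
    refine mem_of_superset (inter_mem hUres hiff) ?_
    rintro x ⟨hxU, hxiff⟩
    exact hxiff.mpr hxU
end

section
/- Let f : X → Y be a surjective, continuous, open map between topological spaces where Y is a Baire space, and let D ⊆ X be a countable intersection of dense open sets. Then for comeagrely many y ∈ Y, the set D ∩ f⁻¹(y) is comeagre in the fibre f⁻¹(y). -/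
open TopologicalSpace Set

theorem stmt5 {X Y : Type*} [TopologicalSpace X] [SecondCountableTopology X]
    [TopologicalSpace Y] [BaireSpace Y]
    (f : X → Y) (hc : Continuous f) (ho : IsOpenMap f) (hs : Function.Surjective f)
    (U : ℕ → Set X) (hU : ∀ n, IsOpen (U n) ∧ Dense (U n))
    (D : Set X) (hD : D = ⋂ n, U n) :
    ∀ᶠ y in residual Y, IsMeagre ((Subtype.val ⁻¹' D : Set (f ⁻¹' {y}))ᶜ) := by
  set B := countableBasis X with hB
  have hBc : B.Countable := countable_countableBasis X
  have hBb := isBasis_countableBasis X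
  -- the good open dense sets
  set W : ℕ → Set X → Set Y := fun n s => f '' (s ∩ U n) ∪ (closure (f '' s))ᶜ with hW
  have hWod : ∀ n, ∀ s ∈ B, IsOpen (W n s) ∧ Dense (W n s) := by
    intro n s hsB
    have hsO : IsOpen s := isOpen_of_mem_countableBasis hsB
    constructor
    · exact (ho _ (hsO.inter (hU n).1)).union (isOpen_compl_iff.2 isClosed_closure)
    · intro y
      by_cases hy : y ∈ closure (f '' s)
      · have h1 : f '' s ⊆ closure (f '' (s ∩ U n)) := by
          have h2 : s ⊆ closure (s ∩ U n) := (hU n).2.open_subset_closure_inter hsO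
          calc f '' s ⊆ f '' closure (s ∩ U n) := image_mono h2
            _ ⊆ closure (f '' (s ∩ U n)) := image_closure_subset_closure_image hc
        have : closure (f '' s) ⊆ closure (f '' (s ∩ U n)) := closure_minimal h1 isClosed_closure
        exact closure_mono subset_union_left (this hy)
      · exact subset_closure (Or.inr hy)
  have hmem : (⋂ n, ⋂ s ∈ B, W n s) ∈ residual Y := by
    refine countable_iInter_mem.2 fun n => (countable_bInter_mem hBc).2 fun s hsB => ?_
    exact residual_of_dense_open (hWod n s hsB).1 (hWod n s hsB).2
  filter_upwards [hmem] with y hy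
  -- each fiber preimage of U n is dense
  have hdense : ∀ n, Dense (Subtype.val ⁻¹' (U n) : Set (f ⁻¹' {y})) := by
    intro n
    rw [dense_iff_inter_open]
    rintro V hV ⟨⟨x, hxf⟩, hxV⟩
    rcases isOpen_induced_iff.1 hV with ⟨O, hO, rfl⟩
    rcases hBb.exists_subset_of_mem_open (show x ∈ O from hxV) hO with ⟨s, hsB, hxs, hsO⟩
    have hyW : y ∈ W n s := by
      have := hy; simp only [mem_iInter] at this; exact this n s hsB
    have hyfs : y ∈ closure (f '' s) :=
      subset_closure ⟨x, hxs, by simpa [mem_preimage, mem_singleton_iff] using hxf⟩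
    rcases hyW with h | h
    · rcases h with ⟨x', ⟨hx's, hx'U⟩, hfx'⟩
      exact ⟨⟨x', by simp [hfx']⟩, hsO hx's, hx'U⟩
    · exact absurd hyfs h
  -- conclude meagreness
  have : (Subtype.val ⁻¹' D : Set (f ⁻¹' {y}))ᶜ = ⋃ n, (Subtype.val ⁻¹' (U n))ᶜ := by
    rw [hD]; simp [preimage_iInter, compl_iInter]
  rw [this]
  refine isMeagre_iUnion fun n => ?_
  have hopen : IsOpen (Subtype.val ⁻¹' (U n) : Set (f ⁻¹' {y})) :=
    (hU n).1.preimage continuous_subtype_val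
  unfold IsMeagre
  rw [compl_compl]
  exact residual_of_dense_open hopen (hdense n)
end

section
/- Let G be a non-trivial Polish group. For every sequence (gₙ) ∈ G^ℕ, the set of sequences (fₙ) ∈ G^ℕ that are 'similar' to (gₙ) — meaning for every subsequence (nₖ), gₙₖ → 1 if and only if fₙₖ → 1 — is meagre in G^ℕ with the product topology. -/
open Filter Set Topology

lemma aux_dense {G : Type*} [TopologicalSpace G] (m : ℕ → ℕ) (hm : StrictMono m)
    (W : Set G) (hWne : W.Nonempty) (N : ℕ) :
    Dense (⋃ k, ⋃ _ : N ≤ k, {f : ℕ → G | f (m k) ∈ W}) := by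
  rw [dense_iff_inter_open]
  intro U hU ⟨f, hf⟩
  obtain ⟨I, u, hu, hsub⟩ := isOpen_pi_iff.1 hU f hf
  obtain ⟨w, hw⟩ := hWne
  set k := N + ((I.sup id) + 1) with hk
  have hmk : m k ∉ I := by
    intro hmem
    have h1 : (id (m k) : ℕ) ≤ I.sup id := Finset.le_sup hmem
    have h2 : k ≤ m k := hm.le_apply
    simp only [id_eq] at h1
    omega
  refine ⟨Function.update f (m k) w, ?_, ?_⟩
  · apply hsub
    intro i hi
    rw [Function.update_of_ne (by rintro rfl; exact hmk hi)]
    exact (hu i hi).2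
  · exact mem_iUnion.2 ⟨k, mem_iUnion.2 ⟨by omega, by simpa using hw⟩⟩

lemma aux_residual {G : Type*} [TopologicalSpace G] (m : ℕ → ℕ) (hm : StrictMono m)
    (W : Set G) (hW : IsOpen W) (hWne : W.Nonempty) :
    {f : ℕ → G | ∃ᶠ k in atTop, f (m k) ∈ W} ∈ residual (ℕ → G) := by
  have heq : {f : ℕ → G | ∃ᶠ k in atTop, f (m k) ∈ W}
      = ⋂ N, ⋃ k, ⋃ _ : N ≤ k, {f : ℕ → G | f (m k) ∈ W} := by
    ext f
    simp [Filter.frequently_atTop, Set.mem_iInter, Set.mem_iUnion]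
  rw [heq]
  refine (countable_iInter_mem).2 fun N => residual_of_dense_open ?_ (aux_dense m hm W hWne N)
  exact isOpen_iUnion fun k => isOpen_iUnion fun _ =>
    hW.preimage (continuous_apply (m k))

theorem stmt6 {G : Type*} [Group G] [TopologicalSpace G] [IsTopologicalGroup G]
    [PolishSpace G] [Nontrivial G] (g : ℕ → G) :
    IsMeagre {f : ℕ → G | ∀ n : ℕ → ℕ, StrictMono n →
      (Filter.Tendsto (g ∘ n) Filter.atTop (nhds 1) ↔
        Filter.Tendsto (f ∘ n) Filter.atTop (nhds 1))} := by
  by_cases h : ∃ n : ℕ → ℕ, StrictMono n ∧ Tendsto (g ∘ n) atTop (nhds 1)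
  · obtain ⟨n, hn, hg⟩ := h
    obtain ⟨a, ha⟩ := exists_ne (1 : G)
    obtain ⟨V, U, hV, hU, haV, h1U, hdisj⟩ := t2_separation ha
    have hres := aux_residual n hn V hV ⟨a, haV⟩
    rw [IsMeagre]
    refine Filter.mem_of_superset hres fun f hf hfS => ?_
    have htend : Tendsto (f ∘ n) atTop (nhds 1) := (hfS n hn).1 hg
    have hev : ∀ᶠ k in atTop, f (n k) ∈ U := htend (hU.mem_nhds h1U)
    exact (hf.and_eventually hev).exists.elim fun k ⟨hkV, hkU⟩ =>
      (Set.disjoint_left.1 hdisj hkV) hkU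
  · push_neg at h
    letI := TopologicalSpace.upgradeIsCompletelyMetrizable G
    have hres : {f : ℕ → G | ∀ i : ℕ, ∃ᶠ k in atTop, f k ∈ Metric.ball (1 : G) (1 / (i + 1))}
        ∈ residual (ℕ → G) := by
      have heq : {f : ℕ → G | ∀ i : ℕ, ∃ᶠ k in atTop, f k ∈ Metric.ball (1 : G) (1 / (i + 1))}
          = ⋂ i : ℕ, {f : ℕ → G | ∃ᶠ k in atTop, f (id k) ∈ Metric.ball (1 : G) (1 / (i + 1))} := by
        ext f; simp
      rw [heq]
      refine (countable_iInter_mem).2 fun i =>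
        aux_residual id strictMono_id _ Metric.isOpen_ball ⟨1, ?_⟩
      simp [Metric.mem_ball]
      positivity
    rw [IsMeagre]
    refine Filter.mem_of_superset hres fun f hf hfS => ?_
    obtain ⟨φ, hφ, hφ2⟩ := Filter.extraction_forall_of_frequently hf
    have htend : Tendsto (f ∘ φ) atTop (nhds 1) := by
      rw [Metric.tendsto_atTop]
      intro ε hε
      obtain ⟨i, hi⟩ := exists_nat_one_div_lt hε
      refine ⟨i, fun k hk => ?_⟩
      have h1 := hφ2 k
      rw [Metric.mem_ball] at h1
      calc dist ((f ∘ φ) k) 1 < 1 / (k + 1) := h1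
        _ ≤ 1 / (i + 1) := by
            apply one_div_le_one_div_of_le <;> [positivity; exact_mod_cast by omega]
        _ < ε := hi
    exact h φ hφ ((hfS φ hφ).2 htend)
end

section
/- Let Γ be a group acting by isometries on a finite metric subspace A of a metric space, and suppose B = A ∪ {b} is a one-point metric extension of A. Then the function d' on C = A ⊔ Γ defined by: d' agrees with d on A, d'(a, h) = d(h⁻¹·a, b) for a ∈ A and h ∈ Γ (where d(x, b) is the given distance in B), and d'(g, h) = min over a ∈ A of (d'(a, g) + d'(a, h)), is a pseudometric on C extending the metric on B (identifying b with 1 ∈ Γ), and is invariant under the action of Γ given by the original action on A and left multiplication on Γ. -/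
open Classical

/-- The extended distance on `C = A ⊔ Γ`, where the one new point `b` of `B = A ∪ {b}`
is identified with `1 ∈ Γ` and `db a = d(a, b)` records the distances to `b`. -/
noncomputable def dC {Γ A : Type*} [Group Γ] [MetricSpace A] [Fintype A] [Nonempty A]
    [MulAction Γ A] (db : A → ℝ) : (A ⊕ Γ) → (A ⊕ Γ) → ℝ
  | Sum.inl a, Sum.inl a' => dist a a'
  | Sum.inl a, Sum.inr h => db (h⁻¹ • a)
  | Sum.inr g, Sum.inl a => db (g⁻¹ • a)
  | Sum.inr g, Sum.inr h =>
      if g = h then 0 else ⨅ a : A, (db (g⁻¹ • a) + db (h⁻¹ • a))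

/-- The action of `Γ` on `C = A ⊔ Γ`: the original action on `A` and left
multiplication on `Γ`. -/
def actC {Γ A : Type*} [Group Γ] [MulAction Γ A] (f : Γ) : (A ⊕ Γ) → (A ⊕ Γ)
  | Sum.inl a => Sum.inl (f • a)
  | Sum.inr h => Sum.inr (f * h)

theorem stmt9 {Γ A : Type*} [Group Γ] [MetricSpace A] [Fintype A] [Nonempty A]
    [MulAction Γ A]
    (hiso : ∀ g : Γ, Isometry (fun a : A => g • a))
    (db : A → ℝ) (hpos : ∀ a, 0 < db a)
    (hext : ∀ a a' : A, |db a - db a'| ≤ dist a a' ∧ dist a a' ≤ db a + db a') :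
    (∀ z : A ⊕ Γ, dC db z z = 0) ∧
    (∀ z w : A ⊕ Γ, dC db z w = dC db w z) ∧
    (∀ z w u : A ⊕ Γ, dC db z u ≤ dC db z w + dC db w u) ∧
    (∀ a a' : A, dC db (Sum.inl a : A ⊕ Γ) (Sum.inl a') = dist a a') ∧
    (∀ a : A, dC db (Sum.inl a) (Sum.inr (1 : Γ)) = db a) ∧
    (∀ (f : Γ) (z w : A ⊕ Γ), dC db (actC f z) (actC f w) = dC db z w) := by
  have hdist : ∀ (g : Γ) (a a' : A), dist (g⁻¹ • a) (g⁻¹ • a') = dist a a' :=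
    fun g a a' => (hiso g⁻¹).dist_eq a a'
  have bdd : ∀ (f : A → ℝ), BddBelow (Set.range f) :=
    fun f => (Set.finite_range f).bddBelow
  have hle : ∀ (g h : Γ) (a : A), g ≠ h →
      dC db (Sum.inr g) (Sum.inr h) ≤ db (g⁻¹ • a) + db (h⁻¹ • a) := by
    intro g h a hgh
    simp only [dC, if_neg hgh]
    exact ciInf_le (bdd _) a
  have hnn : ∀ g h : Γ, 0 ≤ dC db (Sum.inr g) (Sum.inr h) := by
    intro g h
    by_cases hgh : g = h
    · simp [dC, hgh]
    · simp only [dC, if_neg hgh]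
      exact le_ciInf fun a => add_nonneg (hpos _).le (hpos _).le
  -- db is 1-Lipschitz in each orbit
  have T1 : ∀ (g : Γ) (a a' : A), db (g⁻¹ • a) ≤ dist a a' + db (g⁻¹ • a') := by
    intro g a a'
    have h := abs_le.mp (hext (g⁻¹ • a) (g⁻¹ • a')).1
    rw [hdist] at h
    linarith [h.2]
  have T2 : ∀ (g : Γ) (a a' : A), dist a a' ≤ db (g⁻¹ • a) + db (g⁻¹ • a') := by
    intro g a a'
    have h := (hext (g⁻¹ • a) (g⁻¹ • a')).2
    rwa [hdist] at h
  refine ⟨?_, ?_, ?_, ?_, ?_, ?_⟩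
  · rintro (a | g)
    · simp [dC]
    · simp [dC]
  · rintro (a | g) (a' | h)
    · simp [dC, dist_comm]
    · simp [dC]
    · simp [dC]
    · by_cases hgh : g = h
      · subst hgh; rfl
      · simp only [dC, if_neg hgh, if_neg (Ne.symm hgh)]
        exact congrArg _ (funext fun a => add_comm _ _)
  · rintro (a | g) (a' | h) (a'' | k)
    · exact dist_triangle a a' a''
    · simpa [dC] using T1 k a a'
    · simpa [dC] using T2 h a a''
    · -- inl a, inr h, inr k
      by_cases hhk : h = k
      · subst hhk; simp [dC]
      · show db (k⁻¹ • a) ≤ db (h⁻¹ • a) + dC db (Sum.inr h) (Sum.inr k)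
        simp only [dC, if_neg hhk]
        rw [← sub_le_iff_le_add']
        refine le_ciInf fun x => ?_
        have h1 := T1 k a x
        have h2 := T2 h a x
        linarith
    · -- inr g, inl a', inl a''
      have := T1 g a'' a'
      show db (g⁻¹ • a'') ≤ db (g⁻¹ • a') + dist a' a''
      rw [dist_comm a' a'']
      linarith
    · -- inr g, inl a', inr k
      by_cases hgk : g = k
      · subst hgk
        simp only [dC, if_pos rfl]
        exact add_nonneg (hpos _).le (hpos _).le
      · exact hle g k a' hgk
    · -- inr g, inr h, inl a''
      by_cases hgh : g = h
      · subst hgh; simp [dC]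
      · show db (g⁻¹ • a'') ≤ dC db (Sum.inr g) (Sum.inr h) + db (h⁻¹ • a'')
        simp only [dC, if_neg hgh]
        rw [← sub_le_iff_le_add]
        refine le_ciInf fun x => ?_
        have h1 := T1 g a'' x
        have h2 := T2 h a'' x
        linarith
    · -- inr g, inr h, inr k
      by_cases hgk : g = k
      · subst hgk
        simp only [dC, if_pos rfl]
        exact add_nonneg (hnn g h) (hnn h g)
      by_cases hgh : g = h
      · subst hgh; simp [dC, if_neg hgk]
      by_cases hhk : h = k
      · subst hhk; simp [dC, if_neg hgk]
      · -- general case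
        have key : ∀ x y : A, dC db (Sum.inr g) (Sum.inr k) ≤
            (db (g⁻¹ • x) + db (h⁻¹ • x)) + (db (h⁻¹ • y) + db (k⁻¹ • y)) := by
          intro x y
          have h1 := hle g k x hgk
          have h2 := T1 k x y
          have h3 := T2 h x y
          linarith
        obtain ⟨x0, hx0⟩ := Finite.exists_min (fun x : A => db (g⁻¹ • x) + db (h⁻¹ • x))
        obtain ⟨y0, hy0⟩ := Finite.exists_min (fun y : A => db (h⁻¹ • y) + db (k⁻¹ • y))
        have e1 : dC db (Sum.inr g) (Sum.inr h) = db (g⁻¹ • x0) + db (h⁻¹ • x0) := by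
          simp only [dC, if_neg hgh]
          exact le_antisymm (ciInf_le (bdd _) x0) (le_ciInf hx0)
        have e2 : dC db (Sum.inr h) (Sum.inr k) = db (h⁻¹ • y0) + db (k⁻¹ • y0) := by
          simp only [dC, if_neg hhk]
          exact le_antisymm (ciInf_le (bdd _) y0) (le_ciInf hy0)
        rw [e1, e2]
        exact key x0 y0
  · intro a a'; rfl
  · intro a; simp [dC]
  · intro f
    rintro (a | g) (a' | h)
    · exact (hiso f).dist_eq a a'
    · show db ((f * h)⁻¹ • (f • a)) = db (h⁻¹ • a)
      rw [mul_inv_rev, mul_smul, inv_smul_smul]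
    · show db ((f * g)⁻¹ • (f • a')) = db (g⁻¹ • a')
      rw [mul_inv_rev, mul_smul, inv_smul_smul]
    · show dC db (Sum.inr (f * g)) (Sum.inr (f * h)) = dC db (Sum.inr g) (Sum.inr h)
      by_cases hgh : g = h
      · subst hgh; simp [dC]
      · have hfg : f * g ≠ f * h := fun hc => hgh (mul_left_cancel hc)
        simp only [dC, if_neg hgh, if_neg hfg]
        have hcomp : (fun a : A => db ((f * g)⁻¹ • a) + db ((f * h)⁻¹ • a)) =
            (fun a : A => db (g⁻¹ • a) + db (h⁻¹ • a)) ∘ (fun a : A => f⁻¹ • a) := by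
          funext a
          simp [mul_inv_rev, mul_smul]
        have hsurj : Function.Surjective (fun a : A => f⁻¹ • a) :=
          fun a => ⟨f • a, inv_smul_smul f a⟩
        rw [iInf, iInf, hcomp, Set.range_comp, hsurj.range_eq, Set.image_univ]
end

section
/- Let Γ be a group, Λ ≤ Γ a subgroup, and suppose Γ acts by isometries on a metric space X via π, while Λ acts by isometries via σ on a metric space Y ⊇ X extending π restricted to Λ. Define ∂ on Y × Γ by: ∂((y₁,g₁),(y₂,g₂)) = d(g₂⁻¹g₁·y₁, y₂) if y₁, y₂ ∈ X or g₂⁻¹g₁ ∈ Λ (where the action is via π on X extended by σ when in Λ), and ∂((y₁,g₁),(y₂,g₂)) = inf over x ∈ X of (d(y₁, g₁⁻¹·x) + d(g₂⁻¹·x, y₂)) otherwise. Then ∂ is a pseudometric on Y × Γ, invariant under the Γ-action by left translation on the second coordinate, and the map y ↦ (y, 1) is an isometric embedding of Y into the associated quotient metric space. -/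
set_option linter.unusedSectionVars false
set_option linter.unusedVariables false


open Classical

/-- The pseudometric `∂` on `Y × Γ`, where `Γ` acts by isometries on `X ⊆ Y` (via `π`,
i.e. the `MulAction Γ X` instance) and the subgroup `Λ` acts by isometries on `Y`
(via `σ`, i.e. the `MulAction Λ Y` instance) extending `π|_Λ`. -/
noncomputable def ddYΓ {Γ Y : Type*} [Group Γ] [MetricSpace Y]
    (Λ : Subgroup Γ) (X : Set Y) [MulAction Γ X] [MulAction Λ Y]
    (y₁ : Y) (g₁ : Γ) (y₂ : Y) (g₂ : Γ) : ℝ :=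
  if h : g₂⁻¹ * g₁ ∈ Λ then dist ((⟨g₂⁻¹ * g₁, h⟩ : Λ) • y₁) y₂
  else if hx : y₁ ∈ X ∧ y₂ ∈ X then
    dist ((((g₂⁻¹ * g₁) • (⟨y₁, hx.1⟩ : X) : X) : Y)) y₂
  else ⨅ x : X, (dist y₁ (((g₁⁻¹ • x : X) : Y)) + dist (((g₂⁻¹ • x : X) : Y)) y₂)

section Aux

variable {Γ Y : Type*} [Group Γ] [MetricSpace Y]
    {Λ : Subgroup Γ} {X : Set Y} [MulAction Γ X] [MulAction Λ Y] [Nonempty X]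

lemma pi_dist (hπ : ∀ g : Γ, Isometry (fun x : X => g • x)) (g : Γ) (x x' : X) :
    dist ((g • x : X) : Y) ((g • x' : X) : Y) = dist (x : Y) (x' : Y) := by
  have h := (hπ g).dist_eq x x'
  simpa [Subtype.dist_eq] using h

lemma pi_dist' (hπ : ∀ g : Γ, Isometry (fun x : X => g • x)) (g : Γ) (x x' : X) :
    dist ((g • x : X) : Y) (x' : Y) = dist (x : Y) ((g⁻¹ • x' : X) : Y) := by
  have h := pi_dist hπ g x (g⁻¹ • x')
  rwa [smul_inv_smul] at h

lemma dd_bdd (y₁ y₂ : Y) (g₁ g₂ : Γ) :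
    BddBelow (Set.range fun x : X =>
      dist y₁ (((g₁⁻¹ • x : X) : Y)) + dist (((g₂⁻¹ • x : X) : Y)) y₂) :=
  ⟨0, by rintro r ⟨x, rfl⟩; positivity⟩

lemma smul_mem_X (hcompat : ∀ (l : Λ) (x : X), l • (x : Y) = (((l : Γ) • x : X) : Y))
    (l : Λ) {y : Y} (hy : y ∈ X) : l • y ∈ X := by
  show l • ((⟨y, hy⟩ : X) : Y) ∈ X
  rw [hcompat]
  exact Subtype.coe_prop _

lemma smul_mem_X_iff (hcompat : ∀ (l : Λ) (x : X), l • (x : Y) = (((l : Γ) • x : X) : Y))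
    (l : Λ) (y : Y) : l • y ∈ X ↔ y ∈ X :=
  ⟨fun h => by simpa using smul_mem_X hcompat l⁻¹ h, fun h => smul_mem_X hcompat l h⟩

lemma sigma_coe (hcompat : ∀ (l : Λ) (x : X), l • (x : Y) = (((l : Γ) • x : X) : Y))
    {g₁ g₂ : Γ} (h : g₂⁻¹ * g₁ ∈ Λ) (x : X) :
    (⟨g₂⁻¹ * g₁, h⟩ : Λ) • ((g₁⁻¹ • x : X) : Y) = ((g₂⁻¹ • x : X) : Y) := by
  rw [hcompat]
  congr 1
  rw [smul_smul]
  show ((g₂⁻¹ * g₁) * g₁⁻¹) • x = g₂⁻¹ • x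
  rw [mul_inv_cancel_right]

lemma dd_le_through (hπ : ∀ g : Γ, Isometry (fun x : X => g • x))
    (hσ : ∀ l : Λ, Isometry (fun y : Y => l • y))
    (hcompat : ∀ (l : Λ) (x : X), l • (x : Y) = (((l : Γ) • x : X) : Y))
    (y₁ y₂ : Y) (g₁ g₂ : Γ) (x : X) :
    ddYΓ Λ X y₁ g₁ y₂ g₂ ≤ dist y₁ (((g₁⁻¹ • x : X) : Y)) + dist (((g₂⁻¹ • x : X) : Y)) y₂ := by
  unfold ddYΓ
  split_ifs with h hx
  · have hd : dist ((⟨g₂⁻¹ * g₁, h⟩ : Λ) • y₁) ((⟨g₂⁻¹ * g₁, h⟩ : Λ) • (((g₁⁻¹ • x : X)) : Y))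
        = dist y₁ (((g₁⁻¹ • x : X)) : Y) := (hσ _).dist_eq _ _
    calc dist ((⟨g₂⁻¹ * g₁, h⟩ : Λ) • y₁) y₂
        ≤ dist ((⟨g₂⁻¹ * g₁, h⟩ : Λ) • y₁) ((⟨g₂⁻¹ * g₁, h⟩ : Λ) • (((g₁⁻¹ • x : X)) : Y))
            + dist ((⟨g₂⁻¹ * g₁, h⟩ : Λ) • (((g₁⁻¹ • x : X)) : Y)) y₂ := dist_triangle _ _ _
      _ = dist y₁ (((g₁⁻¹ • x : X)) : Y) + dist (((g₂⁻¹ • x : X)) : Y) y₂ := by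
          rw [hd, sigma_coe hcompat h x]
  · have e : ((g₂⁻¹ * g₁) • (g₁⁻¹ • x) : X) = g₂⁻¹ • x := by
      rw [smul_smul, mul_inv_cancel_right]
    have e2 : dist ((((g₂⁻¹ * g₁) • (⟨y₁, hx.1⟩ : X) : X)) : Y) (((g₂⁻¹ • x : X)) : Y)
        = dist y₁ (((g₁⁻¹ • x : X)) : Y) := by
      rw [← e]; exact pi_dist hπ _ _ _
    calc dist ((((g₂⁻¹ * g₁) • (⟨y₁, hx.1⟩ : X) : X)) : Y) y₂
        ≤ dist ((((g₂⁻¹ * g₁) • (⟨y₁, hx.1⟩ : X) : X)) : Y) (((g₂⁻¹ • x : X)) : Y)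
            + dist (((g₂⁻¹ • x : X)) : Y) y₂ := dist_triangle _ _ _
      _ = dist y₁ (((g₁⁻¹ • x : X)) : Y) + dist (((g₂⁻¹ • x : X)) : Y) y₂ := by rw [e2]
  · exact ciInf_le (dd_bdd y₁ y₂ g₁ g₂) x

lemma through_le_dd (hπ : ∀ g : Γ, Isometry (fun x : X => g • x))
    (hσ : ∀ l : Λ, Isometry (fun y : Y => l • y))
    (hcompat : ∀ (l : Λ) (x : X), l • (x : Y) = (((l : Γ) • x : X) : Y))
    (y₁ y₂ : Y) (g₁ g₂ : Γ) (x : X) :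
    dist y₁ (((g₁⁻¹ • x : X) : Y)) ≤ ddYΓ Λ X y₁ g₁ y₂ g₂ + dist y₂ (((g₂⁻¹ • x : X) : Y)) := by
  unfold ddYΓ
  split_ifs with h hx
  · have hd : dist ((⟨g₂⁻¹ * g₁, h⟩ : Λ) • y₁) ((⟨g₂⁻¹ * g₁, h⟩ : Λ) • (((g₁⁻¹ • x : X)) : Y))
        = dist y₁ (((g₁⁻¹ • x : X)) : Y) := (hσ _).dist_eq _ _
    rw [← hd, sigma_coe hcompat h x]
    exact dist_triangle _ _ _
  · have e : ((g₂⁻¹ * g₁) • (g₁⁻¹ • x) : X) = g₂⁻¹ • x := by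
      rw [smul_smul, mul_inv_cancel_right]
    have e2 : dist y₁ (((g₁⁻¹ • x : X)) : Y)
        = dist ((((g₂⁻¹ * g₁) • (⟨y₁, hx.1⟩ : X) : X)) : Y) (((g₂⁻¹ • x : X)) : Y) := by
      rw [← e]; exact (pi_dist hπ (g₂⁻¹ * g₁) (⟨y₁, hx.1⟩ : X) (g₁⁻¹ • x)).symm
    rw [e2]
    exact dist_triangle _ _ _
  · rw [← sub_le_iff_le_add]
    refine le_ciInf fun x' => ?_
    rw [sub_le_iff_le_add]
    have e1 : dist (((g₁⁻¹ • x' : X)) : Y) (((g₁⁻¹ • x : X)) : Y)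
        = dist (((g₂⁻¹ • x' : X)) : Y) (((g₂⁻¹ • x : X)) : Y) := by
      rw [pi_dist hπ, pi_dist hπ]
    calc dist y₁ (((g₁⁻¹ • x : X)) : Y)
        ≤ dist y₁ (((g₁⁻¹ • x' : X)) : Y) + dist (((g₁⁻¹ • x' : X)) : Y) (((g₁⁻¹ • x : X)) : Y) :=
          dist_triangle _ _ _
      _ = dist y₁ (((g₁⁻¹ • x' : X)) : Y) + dist (((g₂⁻¹ • x' : X)) : Y) (((g₂⁻¹ • x : X)) : Y) := by
          rw [e1]
      _ ≤ dist y₁ (((g₁⁻¹ • x' : X)) : Y)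
            + (dist (((g₂⁻¹ • x' : X)) : Y) y₂ + dist y₂ (((g₂⁻¹ • x : X)) : Y)) := by
          gcongr
          exact dist_triangle _ _ _
      _ = (dist y₁ (((g₁⁻¹ • x' : X)) : Y) + dist (((g₂⁻¹ • x' : X)) : Y) y₂)
            + dist y₂ (((g₂⁻¹ • x : X)) : Y) := by ring

lemma dd_symm (hπ : ∀ g : Γ, Isometry (fun x : X => g • x))
    (hσ : ∀ l : Λ, Isometry (fun y : Y => l • y))
    (hcompat : ∀ (l : Λ) (x : X), l • (x : Y) = (((l : Γ) • x : X) : Y))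
    (y₁ y₂ : Y) (g₁ g₂ : Γ) :
    ddYΓ Λ X y₁ g₁ y₂ g₂ = ddYΓ Λ X y₂ g₂ y₁ g₁ := by
  unfold ddYΓ
  by_cases h : g₂⁻¹ * g₁ ∈ Λ
  · have h' : g₁⁻¹ * g₂ ∈ Λ := by
      have hh := Λ.inv_mem h
      rwa [mul_inv_rev, inv_inv] at hh
    rw [dif_pos h, dif_pos h']
    have hinv : (⟨g₁⁻¹ * g₂, h'⟩ : Λ) = (⟨g₂⁻¹ * g₁, h⟩ : Λ)⁻¹ := by
      ext
      simp [mul_inv_rev]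
    rw [hinv]
    have hd : dist ((⟨g₂⁻¹ * g₁, h⟩ : Λ) • ((⟨g₂⁻¹ * g₁, h⟩ : Λ)⁻¹ • y₂))
        ((⟨g₂⁻¹ * g₁, h⟩ : Λ) • y₁) = dist ((⟨g₂⁻¹ * g₁, h⟩ : Λ)⁻¹ • y₂) y₁ :=
      (hσ _).dist_eq _ _
    rw [smul_inv_smul] at hd
    rw [← hd, dist_comm]
  · have h' : ¬ (g₁⁻¹ * g₂ ∈ Λ) := by
      intro hh
      apply h
      have hhh := Λ.inv_mem hh
      rwa [mul_inv_rev, inv_inv] at hhh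
    by_cases hx : y₁ ∈ X ∧ y₂ ∈ X
    · rw [dif_neg h, dif_neg h', dif_pos hx, dif_pos (⟨hx.2, hx.1⟩ : y₂ ∈ X ∧ y₁ ∈ X)]
      have e : dist ((((g₁⁻¹ * g₂) • (⟨y₂, hx.2⟩ : X) : X)) : Y) ((⟨y₁, hx.1⟩ : X) : Y)
          = dist ((⟨y₂, hx.2⟩ : X) : Y) ((((g₁⁻¹ * g₂)⁻¹ • (⟨y₁, hx.1⟩ : X) : X)) : Y) :=
        pi_dist' hπ _ _ _
      rw [show ((g₁⁻¹ * g₂)⁻¹ : Γ) = g₂⁻¹ * g₁ from by rw [mul_inv_rev, inv_inv]] at e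
      rw [dist_comm]
      exact e.symm
    · have hx' : ¬ (y₂ ∈ X ∧ y₁ ∈ X) := fun hh => hx ⟨hh.2, hh.1⟩
      rw [dif_neg h, dif_neg h', dif_neg hx, dif_neg hx']
      refine iInf_congr fun x => ?_
      rw [dist_comm y₂, dist_comm _ y₁]
      ring

lemma dd_translate (hπ : ∀ g : Γ, Isometry (fun x : X => g • x))
    (hσ : ∀ l : Λ, Isometry (fun y : Y => l • y))
    (hcompat : ∀ (l : Λ) (x : X), l • (x : Y) = (((l : Γ) • x : X) : Y))
    (l : Λ) (y₁ y₂ : Y) (g g₂ : Γ) :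
    ddYΓ Λ X (l • y₁) g y₂ g₂ = ddYΓ Λ X y₁ (g * (l : Γ)) y₂ g₂ := by
  unfold ddYΓ
  by_cases h : g₂⁻¹ * g ∈ Λ
  · have h' : g₂⁻¹ * (g * (l : Γ)) ∈ Λ := by
      rw [← mul_assoc]; exact Λ.mul_mem h l.2
    rw [dif_pos h, dif_pos h']
    have e : (⟨g₂⁻¹ * (g * (l : Γ)), h'⟩ : Λ) = (⟨g₂⁻¹ * g, h⟩ : Λ) * l := by
      ext; simp [mul_assoc]
    rw [e, mul_smul]
  · have h' : ¬ (g₂⁻¹ * (g * (l : Γ)) ∈ Λ) := by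
      intro hh
      apply h
      have hhh := Λ.mul_mem hh (Λ.inv_mem l.2)
      rwa [mul_assoc, mul_inv_cancel_right] at hhh
    by_cases hx : y₁ ∈ X ∧ y₂ ∈ X
    · have hx1 : (l • y₁ ∈ X ∧ y₂ ∈ X) := ⟨smul_mem_X hcompat l hx.1, hx.2⟩
      rw [dif_neg h, dif_neg h', dif_pos hx1, dif_pos hx]
      have e : (⟨l • y₁, hx1.1⟩ : X) = (l : Γ) • (⟨y₁, hx.1⟩ : X) :=
        Subtype.ext (hcompat l ⟨y₁, hx.1⟩)
      have e2 : ((g₂⁻¹ * g) • (⟨l • y₁, hx1.1⟩ : X) : X)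
          = (g₂⁻¹ * (g * (l : Γ))) • (⟨y₁, hx.1⟩ : X) := by
        rw [e, smul_smul, mul_assoc]
      rw [e2]
    · have hx1 : ¬ (l • y₁ ∈ X ∧ y₂ ∈ X) :=
        fun hh => hx ⟨(smul_mem_X_iff hcompat l y₁).1 hh.1, hh.2⟩
      rw [dif_neg h, dif_neg h', dif_neg hx1, dif_neg hx]
      refine iInf_congr fun x => ?_
      have e : ((l : Γ) * (g * (l : Γ))⁻¹) = g⁻¹ := by group
      have e2 : l • ((((g * (l : Γ))⁻¹ • x : X)) : Y) = ((g⁻¹ • x : X) : Y) := by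
        rw [hcompat]
        congr 1
        rw [smul_smul, e]
      have hd : dist (l • y₁) (l • ((((g * (l : Γ))⁻¹ • x : X)) : Y))
          = dist y₁ ((((g * (l : Γ))⁻¹ • x : X)) : Y) := (hσ l).dist_eq _ _
      rw [← e2, hd]

lemma dd_lipschitz (hπ : ∀ g : Γ, Isometry (fun x : X => g • x))
    (hσ : ∀ l : Λ, Isometry (fun y : Y => l • y))
    (hcompat : ∀ (l : Λ) (x : X), l • (x : Y) = (((l : Γ) • x : X) : Y))
    (y₁ y₂ y₃ : Y) (g g₃ : Γ) :
    ddYΓ Λ X y₁ g y₃ g₃ ≤ dist y₁ y₂ + ddYΓ Λ X y₂ g y₃ g₃ := by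
  by_cases h : g₃⁻¹ * g ∈ Λ
  · unfold ddYΓ
    rw [dif_pos h, dif_pos h]
    have hd : dist ((⟨g₃⁻¹ * g, h⟩ : Λ) • y₁) ((⟨g₃⁻¹ * g, h⟩ : Λ) • y₂) = dist y₁ y₂ :=
      (hσ _).dist_eq _ _
    calc dist ((⟨g₃⁻¹ * g, h⟩ : Λ) • y₁) y₃
        ≤ dist ((⟨g₃⁻¹ * g, h⟩ : Λ) • y₁) ((⟨g₃⁻¹ * g, h⟩ : Λ) • y₂)
            + dist ((⟨g₃⁻¹ * g, h⟩ : Λ) • y₂) y₃ := dist_triangle _ _ _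
      _ = dist y₁ y₂ + dist ((⟨g₃⁻¹ * g, h⟩ : Λ) • y₂) y₃ := by rw [hd]
  · by_cases hx : y₂ ∈ X ∧ y₃ ∈ X
    · have h23 : ddYΓ Λ X y₂ g y₃ g₃
          = dist ((((g₃⁻¹ * g) • (⟨y₂, hx.1⟩ : X) : X)) : Y) y₃ := by
        unfold ddYΓ; rw [dif_neg h, dif_pos hx]
      rw [h23]
      have key := dd_le_through hπ hσ hcompat y₁ y₃ g g₃ (g • (⟨y₂, hx.1⟩ : X))
      rw [inv_smul_smul] at key
      have e : g₃⁻¹ • (g • (⟨y₂, hx.1⟩ : X)) = (g₃⁻¹ * g) • (⟨y₂, hx.1⟩ : X) :=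
        smul_smul _ _ _
      rw [e] at key
      exact key
    · have h23 : ddYΓ Λ X y₂ g y₃ g₃
          = ⨅ x : X, (dist y₂ (((g⁻¹ • x : X) : Y)) + dist (((g₃⁻¹ • x : X) : Y)) y₃) := by
        unfold ddYΓ; rw [dif_neg h, dif_neg hx]
      rw [h23, ← sub_le_iff_le_add']
      refine le_ciInf fun x => ?_
      rw [sub_le_iff_le_add']
      have A := dd_le_through hπ hσ hcompat y₁ y₃ g g₃ x
      have t : dist y₁ (((g⁻¹ • x : X)) : Y) ≤ dist y₁ y₂ + dist y₂ (((g⁻¹ • x : X)) : Y) :=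
        dist_triangle _ _ _
      linarith

lemma dd_triangle (hπ : ∀ g : Γ, Isometry (fun x : X => g • x))
    (hσ : ∀ l : Λ, Isometry (fun y : Y => l • y))
    (hcompat : ∀ (l : Λ) (x : X), l • (x : Y) = (((l : Γ) • x : X) : Y))
    (y₁ y₂ y₃ : Y) (g₁ g₂ g₃ : Γ) :
    ddYΓ Λ X y₁ g₁ y₃ g₃ ≤ ddYΓ Λ X y₁ g₁ y₂ g₂ + ddYΓ Λ X y₂ g₂ y₃ g₃ := by
  by_cases h : g₃⁻¹ * g₂ ∈ Λ
  · have e1 : ddYΓ Λ X ((⟨g₃⁻¹ * g₂, h⟩ : Λ)⁻¹ • y₃) g₂ y₁ g₁ = ddYΓ Λ X y₃ g₃ y₁ g₁ := by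
      rw [dd_translate hπ hσ hcompat]
      rw [show g₂ * (((⟨g₃⁻¹ * g₂, h⟩ : Λ)⁻¹ : Λ) : Γ) = g₃ from by simp [mul_inv_rev]]
    have e2 := dd_lipschitz hπ hσ hcompat ((⟨g₃⁻¹ * g₂, h⟩ : Λ)⁻¹ • y₃) y₂ y₁ g₂ g₁
    have e3 : dist ((⟨g₃⁻¹ * g₂, h⟩ : Λ)⁻¹ • y₃) y₂ = ddYΓ Λ X y₂ g₂ y₃ g₃ := by
      unfold ddYΓ
      rw [dif_pos h]
      have hd : dist ((⟨g₃⁻¹ * g₂, h⟩ : Λ) • ((⟨g₃⁻¹ * g₂, h⟩ : Λ)⁻¹ • y₃))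
          ((⟨g₃⁻¹ * g₂, h⟩ : Λ) • y₂) = dist ((⟨g₃⁻¹ * g₂, h⟩ : Λ)⁻¹ • y₃) y₂ :=
        (hσ _).dist_eq _ _
      rw [smul_inv_smul] at hd
      rw [← hd, dist_comm]
    rw [dd_symm hπ hσ hcompat y₁ y₃ g₁ g₃, ← e1, dd_symm hπ hσ hcompat y₁ y₂ g₁ g₂]
    calc ddYΓ Λ X ((⟨g₃⁻¹ * g₂, h⟩ : Λ)⁻¹ • y₃) g₂ y₁ g₁
        ≤ dist ((⟨g₃⁻¹ * g₂, h⟩ : Λ)⁻¹ • y₃) y₂ + ddYΓ Λ X y₂ g₂ y₁ g₁ := e2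
      _ = ddYΓ Λ X y₂ g₂ y₁ g₁ + ddYΓ Λ X y₂ g₂ y₃ g₃ := by rw [e3]; ring
  · by_cases hx : y₂ ∈ X ∧ y₃ ∈ X
    · have A := dd_le_through hπ hσ hcompat y₁ y₃ g₁ g₃ (g₃ • (⟨y₃, hx.2⟩ : X))
      rw [inv_smul_smul] at A
      have A' : ddYΓ Λ X y₁ g₁ y₃ g₃
          ≤ dist y₁ (((g₁⁻¹ • (g₃ • (⟨y₃, hx.2⟩ : X)) : X)) : Y) := by
        have hz : dist (((⟨y₃, hx.2⟩ : X)) : Y) y₃ = 0 := dist_self y₃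
        linarith [A, hz.ge, hz.le]
      have E := through_le_dd hπ hσ hcompat y₁ y₂ g₁ g₂ (g₃ • (⟨y₃, hx.2⟩ : X))
      have h23 : ddYΓ Λ X y₂ g₂ y₃ g₃
          = dist y₂ (((g₂⁻¹ • (g₃ • (⟨y₃, hx.2⟩ : X)) : X)) : Y) := by
        unfold ddYΓ
        rw [dif_neg h, dif_pos hx]
        have e : dist ((((g₃⁻¹ * g₂) • (⟨y₂, hx.1⟩ : X) : X)) : Y) y₃
            = dist y₂ ((((g₂⁻¹ * g₃) • (⟨y₃, hx.2⟩ : X) : X)) : Y) := by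
          have e0 := pi_dist' hπ (g₃⁻¹ * g₂) (⟨y₂, hx.1⟩ : X) (⟨y₃, hx.2⟩ : X)
          rw [show ((g₃⁻¹ * g₂)⁻¹ : Γ) = g₂⁻¹ * g₃ from by rw [mul_inv_rev, inv_inv]] at e0
          exact e0
        rw [e, smul_smul]
      rw [h23]
      linarith [A', E]
    · have h23 : ddYΓ Λ X y₂ g₂ y₃ g₃
          = ⨅ x : X, (dist y₂ (((g₂⁻¹ • x : X) : Y)) + dist (((g₃⁻¹ • x : X) : Y)) y₃) := by
        unfold ddYΓ; rw [dif_neg h, dif_neg hx]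
      rw [h23, ← sub_le_iff_le_add']
      refine le_ciInf fun x => ?_
      rw [sub_le_iff_le_add']
      have A := dd_le_through hπ hσ hcompat y₁ y₃ g₁ g₃ x
      have E := through_le_dd hπ hσ hcompat y₁ y₂ g₁ g₂ x
      linarith

end Aux

theorem stmt10 {Γ Y : Type*} [Group Γ] [MetricSpace Y]
    (Λ : Subgroup Γ) (X : Set Y) [MulAction Γ X] [MulAction Λ Y] [Nonempty X]
    (hπ : ∀ g : Γ, Isometry (fun x : X => g • x))
    (hσ : ∀ l : Λ, Isometry (fun y : Y => l • y))
    (hcompat : ∀ (l : Λ) (x : X), l • (x : Y) = (((l : Γ) • x : X) : Y)) :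
    (∀ (y : Y) (g : Γ), ddYΓ Λ X y g y g = 0) ∧
    (∀ (y₁ y₂ : Y) (g₁ g₂ : Γ), ddYΓ Λ X y₁ g₁ y₂ g₂ = ddYΓ Λ X y₂ g₂ y₁ g₁) ∧
    (∀ (y₁ y₂ y₃ : Y) (g₁ g₂ g₃ : Γ),
      ddYΓ Λ X y₁ g₁ y₃ g₃ ≤ ddYΓ Λ X y₁ g₁ y₂ g₂ + ddYΓ Λ X y₂ g₂ y₃ g₃) ∧
    (∀ (f : Γ) (y₁ y₂ : Y) (g₁ g₂ : Γ),
      ddYΓ Λ X y₁ (f * g₁) y₂ (f * g₂) = ddYΓ Λ X y₁ g₁ y₂ g₂) ∧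
    (∀ y₁ y₂ : Y, ddYΓ Λ X y₁ 1 y₂ 1 = dist y₁ y₂) := by
  refine ⟨?_, ?_, ?_, ?_, ?_⟩
  · intro y g
    unfold ddYΓ
    have h : g⁻¹ * g ∈ Λ := by simpa using Λ.one_mem
    rw [dif_pos h]
    have e : (⟨g⁻¹ * g, h⟩ : Λ) = 1 := by ext; simp
    rw [e, one_smul, dist_self]
  · exact fun y₁ y₂ g₁ g₂ => dd_symm hπ hσ hcompat y₁ y₂ g₁ g₂
  · exact fun y₁ y₂ y₃ g₁ g₂ g₃ => dd_triangle hπ hσ hcompat y₁ y₂ y₃ g₁ g₂ g₃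
  · intro f y₁ y₂ g₁ g₂
    unfold ddYΓ
    have key : (f * g₂)⁻¹ * (f * g₁) = g₂⁻¹ * g₁ := by group
    simp only [key]
    split_ifs with h hx
    · rfl
    · rfl
    · have e1 : ∀ x : X, ((f * g₁)⁻¹ • x : X) = g₁⁻¹ • ((f⁻¹ : Γ) • x) := by
        intro x; rw [mul_inv_rev, mul_smul]
      have e2 : ∀ x : X, ((f * g₂)⁻¹ • x : X) = g₂⁻¹ • ((f⁻¹ : Γ) • x) := by
        intro x; rw [mul_inv_rev, mul_smul]
      simp only [e1, e2]
      exact Equiv.iInf_comp (g := fun x : X =>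
        dist y₁ (((g₁⁻¹ • x : X) : Y)) + dist (((g₂⁻¹ • x : X) : Y)) y₂)
        (MulAction.toPerm (f⁻¹ : Γ))
  · intro y₁ y₂
    unfold ddYΓ
    have h : (1 : Γ)⁻¹ * 1 ∈ Λ := by simpa using Λ.one_mem
    rw [dif_pos h]
    have e : (⟨(1 : Γ)⁻¹ * 1, h⟩ : Λ) = 1 := by ext; simp
    rw [e, one_smul]
end

section
/- Let (X, d) be a metric space, A ⊆ X a finite nonempty subset, and define Ex(A) = {r₁ + ⋯ + rₙ : rᵢ ∈ d[A × A], r₁ + ⋯ + rₙ ≤ diam(A)}. Define ∂_A(x, y) = min{s ∈ Ex(A) : d(x, y) ≤ s} if d(x, y) ≤ diam(A), and ∂_A(x, y) = diam(A) otherwise. Then ∂_A is a metric on X agreeing with d on A, and every isometry of (X, d) is an isometry of (X, ∂_A) provided it maps A onto A, and more generally every d-isometry of X onto itself is a ∂_A-isometry. -/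
/-- The set of distances realized by pairs of points of `A`. -/
def distSet {X : Type*} [MetricSpace X] (A : Set X) : Set ℝ :=
  {r | ∃ a ∈ A, ∃ b ∈ A, dist a b = r}

/-- The diameter of the finite set `A`. -/
noncomputable def diamA {X : Type*} [MetricSpace X] (A : Set X) : ℝ :=
  sSup (distSet A)

/-- The expanded value set `Ex(A)`: sums `r₁ + ⋯ + rₙ` of distances realized in `A`
that do not exceed `diam(A)`. -/
def ExA {X : Type*} [MetricSpace X] (A : Set X) : Set ℝ :=
  {s | (∃ l : List ℝ, (∀ r ∈ l, r ∈ distSet A) ∧ l.sum = s) ∧ s ≤ diamA A}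

/-- The metric `∂_A`. -/
noncomputable def partA {X : Type*} [MetricSpace X] (A : Set X) (x y : X) : ℝ :=
  if dist x y ≤ diamA A then sInf {s ∈ ExA A | dist x y ≤ s} else diamA A

theorem stmt12 {X : Type*} [MetricSpace X] (A : Set X) (hfin : A.Finite)
    (h2 : ∃ a ∈ A, ∃ b ∈ A, a ≠ b) :
    -- `∂_A` is a metric on `X`:
    (∀ x y : X, 0 ≤ partA A x y) ∧
    (∀ x y : X, partA A x y = 0 ↔ x = y) ∧
    (∀ x y : X, partA A x y = partA A y x) ∧
    (∀ x y z : X, partA A x z ≤ partA A x y + partA A y z) ∧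
    -- `∂_A` agrees with `d` on `A`:
    (∀ a ∈ A, ∀ b ∈ A, partA A a b = dist a b) ∧
    -- every surjective `d`-isometry of `X` is a `∂_A`-isometry:
    (∀ f : X → X, Isometry f → Function.Surjective f →
      ∀ x y : X, partA A (f x) (f y) = partA A x y) := by
  obtain ⟨a0, ha0, b0, hb0, hab⟩ := h2
  set D := diamA A with hD
  -- basic facts about distSet
  have hfinDS : (distSet A).Finite := by
    have heq : distSet A = (fun p : X × X => dist p.1 p.2) '' (A ×ˢ A) := by
      ext r
      constructor
      · rintro ⟨a, ha, b, hb, h⟩; exact ⟨(a, b), ⟨ha, hb⟩, h⟩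
      · rintro ⟨⟨a, b⟩, ⟨ha, hb⟩, h⟩; exact ⟨a, ha, b, hb, h⟩
    rw [heq]; exact (hfin.prod hfin).image _
  have hne : (distSet A).Nonempty := ⟨dist a0 b0, a0, ha0, b0, hb0, rfl⟩
  have hDmem : D ∈ distSet A := Set.Nonempty.csSup_mem hne hfinDS
  have hle : ∀ r ∈ distSet A, r ≤ D := fun r hr => le_csSup hfinDS.bddAbove hr
  have hnonneg : ∀ r ∈ distSet A, 0 ≤ r := by
    rintro r ⟨a, ha, b, hb, rfl⟩; exact dist_nonneg
  have hDpos : 0 < D :=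
    lt_of_lt_of_le (dist_pos.mpr hab) (hle _ ⟨a0, ha0, b0, hb0, rfl⟩)
  -- basic facts about ExA
  have h0Ex : (0 : ℝ) ∈ ExA A := ⟨⟨[], by simp, by simp⟩, hDpos.le⟩
  have hdistEx : ∀ r ∈ distSet A, r ∈ ExA A := fun r hr =>
    ⟨⟨[r], by simpa using hr, by simp⟩, hle r hr⟩
  have hDEx : D ∈ ExA A := hdistEx D hDmem
  have hExnn : ∀ s ∈ ExA A, 0 ≤ s := by
    rintro s ⟨⟨l, hl, rfl⟩, -⟩
    exact List.sum_nonneg fun r hr => hnonneg r (hl r hr)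
  have hadd : ∀ s ∈ ExA A, ∀ t ∈ ExA A, s + t ≤ D → s + t ∈ ExA A := by
    rintro s ⟨⟨l, hl, rfl⟩, -⟩ t ⟨⟨m, hm, rfl⟩, -⟩ h
    refine ⟨⟨l ++ m, ?_, by simp⟩, h⟩
    intro r hr
    rcases List.mem_append.mp hr with h' | h'
    exacts [hl r h', hm r h']
  -- candidate sets
  set S : X → X → Set ℝ := fun x y => {s ∈ ExA A | dist x y ≤ s} with hS
  have hSbdd : ∀ x y, BddBelow (S x y) := fun x y => ⟨0, fun s hs => hExnn s hs.1⟩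
  have hSne : ∀ x y, dist x y ≤ D → (S x y).Nonempty := fun x y h => ⟨D, hDEx, h⟩
  have hpartS : ∀ x y, dist x y ≤ D → partA A x y = sInf (S x y) := by
    intro x y h; rw [partA, if_pos h]
  have hpartD : ∀ x y, ¬ dist x y ≤ D → partA A x y = D := by
    intro x y h; rw [partA, if_neg h]
  have hpart_le_D : ∀ x y, partA A x y ≤ D := by
    intro x y
    by_cases h : dist x y ≤ D
    · rw [hpartS x y h]; exact csInf_le (hSbdd x y) ⟨hDEx, h⟩
    · rw [hpartD x y h]
  have hpart_ge : ∀ x y, min (dist x y) D ≤ partA A x y := by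
    intro x y
    by_cases h : dist x y ≤ D
    · rw [hpartS x y h]
      exact le_csInf (hSne x y h) fun s hs => le_trans (min_le_left _ _) hs.2
    · rw [hpartD x y h]; exact min_le_right _ _
  -- key lemma for the triangle inequality
  have hkey : ∀ x y z : X, ∀ s t : ℝ, s ∈ ExA A → t ∈ ExA A →
      min (dist x y) D ≤ s → min (dist y z) D ≤ t → partA A x z ≤ s + t := by
    intro x y z s t hsEx htEx hsm htm
    by_cases hst : D ≤ s + t
    · exact (hpart_le_D x z).trans hst
    · push_neg at hst
      have hs' : dist x y ≤ s := by
        rcases le_or_gt (dist x y) D with h' | h'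
        · rwa [min_eq_left h'] at hsm
        · rw [min_eq_right h'.le] at hsm
          nlinarith [hExnn t htEx]
      have ht' : dist y z ≤ t := by
        rcases le_or_gt (dist y z) D with h' | h'
        · rwa [min_eq_left h'] at htm
        · rw [min_eq_right h'.le] at htm
          nlinarith [hExnn s hsEx]
      have hxz : dist x z ≤ s + t := (dist_triangle x y z).trans (add_le_add hs' ht')
      have hin : s + t ∈ ExA A := hadd s hsEx t htEx hst.le
      rw [hpartS x z (hxz.trans hst.le)]
      exact csInf_le (hSbdd x z) ⟨hin, hxz⟩
  -- triangle, step 1: replace the right summand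
  have htri1 : ∀ x y z : X, ∀ t : ℝ, t ∈ ExA A → min (dist y z) D ≤ t →
      partA A x z ≤ partA A x y + t := by
    intro x y z t htEx htm
    by_cases hxy : dist x y ≤ D
    · rw [hpartS x y hxy]
      have : partA A x z - t ≤ sInf (S x y) := by
        refine le_csInf (hSne x y hxy) fun s hs => ?_
        have := hkey x y z s t hs.1 htEx (le_trans (min_le_left _ _) hs.2) htm
        linarith
      linarith
    · rw [hpartD x y hxy]
      exact hkey x y z D t hDEx htEx (min_le_right _ _) htm
  have htri : ∀ x y z : X, partA A x z ≤ partA A x y + partA A y z := by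
    intro x y z
    by_cases hyz : dist y z ≤ D
    · rw [hpartS y z hyz]
      have : partA A x z - partA A x y ≤ sInf (S y z) := by
        refine le_csInf (hSne y z hyz) fun t ht => ?_
        have := htri1 x y z t ht.1 (le_trans (min_le_left _ _) ht.2)
        linarith
      linarith
    · rw [hpartD y z hyz]
      exact htri1 x y z D hDEx (min_le_right _ _)
  refine ⟨?_, ?_, ?_, htri, ?_, ?_⟩
  · -- nonneg
    intro x y
    refine le_trans ?_ (hpart_ge x y)
    exact le_min dist_nonneg hDpos.le
  · -- zero iff
    intro x y
    constructor
    · intro h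
      by_contra hxy
      have h1 : 0 < min (dist x y) D := lt_min (dist_pos.mpr hxy) hDpos
      have := hpart_ge x y
      rw [h] at this
      linarith
    · rintro rfl
      have h0 : dist x x ≤ D := by simp [hDpos.le]
      rw [hpartS x x h0]
      refine le_antisymm (csInf_le (hSbdd x x) ⟨h0Ex, by simp⟩)
        (le_csInf (hSne x x h0) fun s hs => hExnn s hs.1)
  · -- symmetry
    intro x y
    simp only [partA, dist_comm x y]
  · -- agrees on A
    intro a ha b hb
    have hmem : dist a b ∈ distSet A := ⟨a, ha, b, hb, rfl⟩
    have hd : dist a b ≤ D := hle _ hmem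
    rw [hpartS a b hd]
    exact le_antisymm (csInf_le (hSbdd a b) ⟨hdistEx _ hmem, le_refl _⟩)
      (le_csInf (hSne a b hd) fun s hs => hs.2)
  · -- isometry invariance
    intro f hf hsurj x y
    simp only [partA, hf.dist_eq]
end

section
/- Let G be a group acting on a topological space X with a dense orbit, and suppose some orbit G·x is non-meagre. If additionally the set of points with dense orbit is comeagre, then G·x is comeagre in X. In particular, in a Polish space with a continuous Polish group action admitting a dense orbit, any non-meagre orbit is comeagre. -/
open MulAction Set Metric Filter Topology TopologicalSpace

section Aux

variable {G X : Type*} [Group G] [MetricSpace G] [IsTopologicalGroup G]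
  [SecondCountableTopology G] [MetricSpace X] [MulAction G X] [ContinuousSMul G X]

/-- If the orbit of `x` is non-meagre, then the image of any nonempty open subset of `G`
under the orbit map is non-meagre. -/
private lemma aux_nonmeagre (x : X) (hnm : ¬ IsMeagre (MulAction.orbit G x : Set X))
    {V : Set G} (hVo : IsOpen V) (hVne : V.Nonempty) :
    ¬ IsMeagre ((fun g : G => g • x) '' V) := by
  intro hM
  obtain ⟨s, hsc, hsd⟩ := TopologicalSpace.exists_countable_dense G
  apply hnm
  set S : Set X := (fun g : G => g • x) '' V with hS
  have hTm : ∀ g : G, IsMeagre ((fun y : X => g • y) '' S) := by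
    intro g
    have h1 : (fun y : X => g • y) '' S = (fun y : X => g⁻¹ • y) ⁻¹' S := by
      ext z
      constructor
      · rintro ⟨y, hy, rfl⟩
        simpa [inv_smul_smul] using hy
      · intro hz
        exact ⟨g⁻¹ • z, hz, by simp⟩
    rw [h1]
    exact hM.preimage_of_isOpenMap (continuous_const_smul _) (isOpenMap_smul (g⁻¹ : G))
  have hcov : (MulAction.orbit G x : Set X) ⊆ ⋃ g ∈ s, (fun y : X => g • y) '' S := by
    rintro z hz
    obtain ⟨h, rfl⟩ := MulAction.mem_orbit_iff.mp hz
    have hWo : IsOpen ((fun v : G => h * v⁻¹) '' V) := by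
      have : (fun v : G => h * v⁻¹) '' V = (Homeomorph.mulLeft h) '' ((Homeomorph.inv G) '' V) := by
        rw [Set.image_image]; rfl
      rw [this]
      exact (Homeomorph.mulLeft h).isOpenMap _ ((Homeomorph.inv G).isOpenMap _ hVo)
    have hWne : ((fun v : G => h * v⁻¹) '' V).Nonempty := hVne.image _
    obtain ⟨g, hgW, hgs⟩ := hsd.inter_open_nonempty _ hWo hWne
    obtain ⟨v, hvV, rfl⟩ := hgW
    refine Set.mem_biUnion hgs ⟨v • x, ⟨v, hvV, rfl⟩, ?_⟩
    simp [smul_smul, mul_assoc]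
  refine IsMeagre.mono hcov ?_
  rw [IsMeagre, Set.compl_iUnion₂]
  exact (countable_bInter_mem hsc).mpr fun g hg => hTm g
/-- A non-meagre set has somewhere dense closure. -/
private lemma aux_intcl {Y : Type*} [TopologicalSpace Y] {S : Set Y} (h : ¬ IsMeagre S) :
    (interior (closure S)).Nonempty := by
  rw [Set.nonempty_iff_ne_empty]
  intro he
  apply h
  have hdc : Dense (closure S)ᶜ := interior_eq_empty_iff_dense_compl.mp he
  have hres : (closure S)ᶜ ∈ residual Y :=
    residual_of_dense_open isClosed_closure.isOpen_compl hdc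
  have hm : IsMeagre (closure S) := by rwa [IsMeagre]
  exact hm.mono subset_closure

/-- Refinement lemma. -/
private lemma aux_refine (x : X) (hnm : ¬ IsMeagre (MulAction.orbit G x : Set X))
    {B : Set G} {V : Set X} (hBo : IsOpen B) (hVo : IsOpen V)
    (hne : (B ∩ (fun g : G => g • x) ⁻¹' V).Nonempty) {ε : ℝ} (hε : 0 < ε) :
    ∃ B' : Set G, ∃ W' : Set X, IsOpen B' ∧ B'.Nonempty ∧ B' ⊆ B ∧
      (∃ b, B' ⊆ Metric.ball b ε) ∧ IsOpen W' ∧ W'.Nonempty ∧ closure W' ⊆ V ∧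
      W' ⊆ closure ((fun g : G => g • x) '' B') := by
  have hφc : Continuous (fun g : G => g • x) := continuous_id.smul continuous_const
  obtain ⟨b, hbB, hbV⟩ := hne
  obtain ⟨r, hr, hball⟩ := Metric.isOpen_iff.mp hVo _ hbV
  set B' : Set G := B ∩ ((fun g : G => g • x) ⁻¹' Metric.ball (b • x) (r/2)) ∩ Metric.ball b ε
    with hB'
  have hB'o : IsOpen B' := ((hBo.inter (isOpen_ball.preimage hφc)).inter isOpen_ball)
  have hbB' : b ∈ B' := by
    refine ⟨⟨hbB, ?_⟩, Metric.mem_ball_self hε⟩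
    simp only [Set.mem_preimage]
    exact Metric.mem_ball_self (by linarith)
  have hB'B : B' ⊆ B := fun g hg => hg.1.1
  have himg : closure ((fun g : G => g • x) '' B') ⊆ V := by
    have h1 : (fun g : G => g • x) '' B' ⊆ Metric.ball (b • x) (r/2) := by
      rintro _ ⟨g, hg, rfl⟩; exact hg.1.2
    calc closure ((fun g : G => g • x) '' B') ⊆ closure (Metric.ball (b • x) (r/2)) :=
          closure_mono h1
      _ ⊆ Metric.closedBall (b • x) (r/2) := Metric.closure_ball_subset_closedBall
      _ ⊆ Metric.ball (b • x) r := Metric.closedBall_subset_ball (by linarith)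
      _ ⊆ V := hball
  have hnm' : ¬ IsMeagre ((fun g : G => g • x) '' B') :=
    aux_nonmeagre x hnm hB'o ⟨b, hbB'⟩
  obtain ⟨w, hw⟩ := aux_intcl hnm'
  obtain ⟨r₂, hr₂, hball₂⟩ := Metric.isOpen_iff.mp isOpen_interior _ hw
  refine ⟨B', Metric.ball w (r₂/2), hB'o, ⟨b, hbB'⟩, hB'B, ⟨b, fun g hg => hg.2⟩,
    isOpen_ball, ⟨w, Metric.mem_ball_self (by linarith)⟩, ?_, ?_⟩
  · calc closure (Metric.ball w (r₂/2)) ⊆ Metric.closedBall w (r₂/2) :=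
        Metric.closure_ball_subset_closedBall
      _ ⊆ Metric.ball w r₂ := Metric.closedBall_subset_ball (by linarith)
      _ ⊆ interior (closure ((fun g : G => g • x) '' B')) := hball₂
      _ ⊆ closure ((fun g : G => g • x) '' B') := interior_subset
      _ ⊆ V := himg
  · intro z hz
    exact interior_subset (hball₂ (Metric.ball_subset_ball (by linarith) hz))

/-- Validity of a pair `(B, W)`: `B` open nonempty in `G`, `W` open nonempty in `X`,
and `W` contained in the closure of the image of `B` under the orbit map. -/
private def GoodPair (φ : G → X) (p : Set G × Set X) : Prop :=
  IsOpen p.1 ∧ p.1.Nonempty ∧ IsOpen p.2 ∧ p.2.Nonempty ∧ p.2 ⊆ closure (φ '' p.1)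

/-- Children lemma: every good pair admits a family of refinements at scale `ε` with pairwise
disjoint second components whose union is dense in the second component of the parent. -/
private lemma aux_children (x : X) (hnm : ¬ IsMeagre (MulAction.orbit G x : Set X))
    {p : Set G × Set X} (hp : GoodPair (fun g : G => g • x) p) {ε : ℝ} (hε : 0 < ε) :
    ∃ A : Set (Set G × Set X),
      (∀ q ∈ A, GoodPair (fun g : G => g • x) q ∧ q.1 ⊆ p.1 ∧
        (∃ b, q.1 ⊆ Metric.ball b ε) ∧ closure q.2 ⊆ p.2) ∧
      (A.Pairwise fun q q' => Disjoint q.2 q'.2) ∧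
      (∀ U : Set X, IsOpen U → (U ∩ p.2).Nonempty → (U ∩ ⋃ q ∈ A, q.2).Nonempty) := by
  set φ : G → X := fun g : G => g • x with hφ
  set R : Set (Set G × Set X) := {q | GoodPair φ q ∧ q.1 ⊆ p.1 ∧
    (∃ b, q.1 ⊆ Metric.ball b ε) ∧ closure q.2 ⊆ p.2} with hR
  set S : Set (Set (Set G × Set X)) :=
    {A | A ⊆ R ∧ A.Pairwise fun q q' => Disjoint q.2 q'.2} with hSdef
  obtain ⟨A, hAmax⟩ : ∃ A, Maximal (· ∈ S) A := by
    apply zorn_subset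
    intro c hcS hchain
    refine ⟨⋃₀ c, ⟨?_, ?_⟩, fun s hs => Set.subset_sUnion_of_mem hs⟩
    · exact Set.sUnion_subset fun A hA => (hcS hA).1
    · intro q hq q' hq' hne
      obtain ⟨A₁, hA₁c, hqA₁⟩ := hq
      obtain ⟨A₂, hA₂c, hq'A₂⟩ := hq'
      rcases eq_or_ne A₁ A₂ with rfl | hA12
      · exact (hcS hA₁c).2 hqA₁ hq'A₂ hne
      · rcases hchain hA₁c hA₂c hA12 with h | h
        · exact (hcS hA₂c).2 (h hqA₁) hq'A₂ hne
        · exact (hcS hA₁c).2 hqA₁ (h hq'A₂) hne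
  have hAR : A ⊆ R := hAmax.1.1
  refine ⟨A, fun q hq => (hAR hq : q ∈ R), hAmax.1.2, ?_⟩
  intro U hUo hUne
  by_contra hcon
  rw [Set.not_nonempty_iff_eq_empty] at hcon
  -- the open set `U ∩ p.2` meets the image of `p.1`
  have hV₀o : IsOpen (U ∩ p.2) := hUo.inter hp.2.2.1
  obtain ⟨v, hvU, hvp⟩ := hUne
  have hvcl : v ∈ closure (φ '' p.1) := hp.2.2.2.2 hvp
  obtain ⟨z, hz1, hz2⟩ := mem_closure_iff.mp hvcl _ hV₀o ⟨hvU, hvp⟩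
  obtain ⟨b₀, hb₀, rfl⟩ := hz2
  have hne' : (p.1 ∩ φ ⁻¹' (U ∩ p.2)).Nonempty := ⟨b₀, hb₀, hz1⟩
  obtain ⟨B', W', hB'o, hB'ne, hB'sub, hB'ball, hW'o, hW'ne, hW'cl, hW'sub⟩ :=
    aux_refine x hnm hp.1 hV₀o hne' hε
  set q₀ : Set G × Set X := (B', W') with hq₀
  have hq₀R : q₀ ∈ R := by
    refine ⟨⟨hB'o, hB'ne, hW'o, hW'ne, hW'sub⟩, hB'sub, hB'ball, ?_⟩
    exact hW'cl.trans Set.inter_subset_right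
  have hq₀U : W' ⊆ U := (subset_closure.trans hW'cl).trans Set.inter_subset_left
  have hdisj : ∀ q ∈ A, Disjoint W' q.2 := by
    intro q hq
    refine Set.disjoint_left.mpr fun z hzW hzq => ?_
    have : z ∈ U ∩ ⋃ q ∈ A, q.2 := ⟨hq₀U hzW, Set.mem_biUnion hq hzq⟩
    rw [hcon] at this
    exact this
  have hins : insert q₀ A ∈ S := by
    constructor
    · exact Set.insert_subset hq₀R hAR
    · refine (haveI : Std.Symm (fun q q' : Set G × Set X => Disjoint q.2 q'.2) := ⟨fun q q' h => h.symm⟩; Set.pairwise_insert_of_symm) |>.mpr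
        ⟨hAmax.1.2, fun q hq _ => hdisj q hq⟩
  have hq₀A : q₀ ∈ A := hAmax.2 hins (Set.subset_insert _ _) (Set.mem_insert _ _)
  obtain ⟨w, hw⟩ := hW'ne
  have : w ∈ U ∩ ⋃ q ∈ A, q.2 := ⟨hq₀U hw, Set.mem_biUnion hq₀A hw⟩
  rw [hcon] at this
  exact this

end Aux

/-- Main auxiliary result, in the upgraded (complete metric) setting. -/
private lemma aux_main {G X : Type*} [Group G] [MetricSpace G] [IsTopologicalGroup G]
    [CompleteSpace G] [SecondCountableTopology G] [MetricSpace X]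
    [MulAction G X] [ContinuousSMul G X] (x : X)
    (hd : Dense (MulAction.orbit G x : Set X))
    (hnm : ¬ IsMeagre (MulAction.orbit G x : Set X)) :
    IsMeagre (MulAction.orbit G x : Set X)ᶜ := by
  set φ : G → X := fun g : G => g • x with hφdef
  have hφc : Continuous φ := continuous_id.smul continuous_const
  -- choice of children families
  have hch : ∀ (p : Set G × Set X) (n : ℕ), ∃ A : Set (Set G × Set X), GoodPair φ p →
      ((∀ q ∈ A, GoodPair φ q ∧ q.1 ⊆ p.1 ∧
          (∃ b, q.1 ⊆ Metric.ball b ((1/2 : ℝ) ^ n)) ∧ closure q.2 ⊆ p.2) ∧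
        (A.Pairwise fun q q' => Disjoint q.2 q'.2) ∧
        (∀ U : Set X, IsOpen U → (U ∩ p.2).Nonempty → (U ∩ ⋃ q ∈ A, q.2).Nonempty)) := by
    intro p n
    by_cases hp : GoodPair φ p
    · obtain ⟨A, h1, h2, h3⟩ := aux_children x hnm hp (by positivity : (0:ℝ) < (1/2 : ℝ) ^ n)
      exact ⟨A, fun _ => ⟨h1, h2, h3⟩⟩
    · exact ⟨∅, fun h => absurd h hp⟩
  choose F hF using hch
  set L : ℕ → Set (Set G × Set X) :=
    fun n => Nat.rec {((Set.univ : Set G), (Set.univ : Set X))} (fun n Ln => ⋃ p ∈ Ln, F p n) n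
    with hLdef
  have hL0 : L 0 = {((Set.univ : Set G), (Set.univ : Set X))} := rfl
  have hLS : ∀ n, L (n+1) = ⋃ p ∈ L n, F p n := fun n => rfl
  have hroot : GoodPair φ ((Set.univ : Set G), (Set.univ : Set X)) := by
    refine ⟨isOpen_univ, ⟨1, Set.mem_univ 1⟩, isOpen_univ, ⟨x, Set.mem_univ x⟩, ?_⟩
    intro y _
    have : closure (φ '' Set.univ) = closure (MulAction.orbit G x : Set X) := by
      rw [Set.image_univ]
      rfl
    rw [this, hd.closure_eq]
    exact Set.mem_univ y
  -- the combined invariant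
  have hinv : ∀ n, (∀ p ∈ L n, GoodPair φ p) ∧
      (∀ p ∈ L n, ∀ q ∈ L n, (p.2 ∩ q.2).Nonempty → p = q) ∧
      Dense (⋃ p ∈ L n, p.2) := by
    intro n
    induction n with
    | zero =>
      refine ⟨?_, ?_, ?_⟩
      · intro p hp
        rw [hL0, Set.mem_singleton_iff] at hp
        rw [hp]; exact hroot
      · intro p hp q hq _
        rw [hL0, Set.mem_singleton_iff] at hp hq
        rw [hp, hq]
      · have : (⋃ p ∈ L 0, p.2) = (Set.univ : Set X) := by
          rw [hL0]; simp
        rw [this]; exact dense_univ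
    | succ n ih =>
      obtain ⟨ih1, ih2, ih3⟩ := ih
      have hmem : ∀ p' ∈ L (n+1), ∃ p ∈ L n, p' ∈ F p n := by
        intro p' hp'
        rw [hLS] at hp'
        simpa using Set.mem_iUnion₂.mp hp'
      refine ⟨?_, ?_, ?_⟩
      · intro p' hp'
        obtain ⟨p, hpL, hp'F⟩ := hmem p' hp'
        exact ((hF p n (ih1 p hpL)).1 p' hp'F).1
      · intro p' hp' q' hq' hne
        obtain ⟨p, hpL, hp'F⟩ := hmem p' hp'
        obtain ⟨q, hqL, hq'F⟩ := hmem q' hq'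
        have hps := (hF p n (ih1 p hpL)).1 p' hp'F
        have hqs := (hF q n (ih1 q hqL)).1 q' hq'F
        have hsub1 : p'.2 ⊆ p.2 := subset_closure.trans hps.2.2.2
        have hsub2 : q'.2 ⊆ q.2 := subset_closure.trans hqs.2.2.2
        have hpq : p = q := ih2 p hpL q hqL (hne.mono (Set.inter_subset_inter hsub1 hsub2))
        subst hpq
        by_contra hne'
        obtain ⟨z, hz1, hz2⟩ := hne
        exact Set.disjoint_left.mp ((hF p n (ih1 p hpL)).2.1 hp'F hq'F hne') hz1 hz2
      · rw [dense_iff_inter_open]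
        intro U hUo hUne
        obtain ⟨z, hzU, hzE⟩ := dense_iff_inter_open.mp ih3 U hUo hUne
        obtain ⟨p, hpL, hzp⟩ := Set.mem_iUnion₂.mp hzE
        obtain ⟨w, hwU, hwE⟩ := (hF p n (ih1 p hpL)).2.2 U hUo ⟨z, hzU, hzp⟩
        obtain ⟨q, hqF, hwq⟩ := Set.mem_iUnion₂.mp hwE
        refine ⟨w, hwU, Set.mem_iUnion₂.mpr ⟨q, ?_, hwq⟩⟩
        rw [hLS]
        exact Set.mem_iUnion₂.mpr ⟨p, hpL, hqF⟩
  set E : ℕ → Set X := fun n => ⋃ p ∈ L n, p.2 with hE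
  have hEopen : ∀ n, IsOpen (E n) :=
    fun n => isOpen_biUnion fun p hp => ((hinv n).1 p hp).2.2.1
  have hEdense : ∀ n, Dense (E n) := fun n => (hinv n).2.2
  -- the intersection of the `E n` is contained in the orbit
  have hsubO : (⋂ n, E n) ⊆ (MulAction.orbit G x : Set X) := by
    intro y hy
    have hQ : ∀ n, ∃ p, p ∈ L n ∧ y ∈ p.2 := by
      intro n
      have := Set.mem_iInter.mp hy n
      obtain ⟨p, hpL, hyp⟩ := Set.mem_iUnion₂.mp this
      exact ⟨p, hpL, hyp⟩
    choose q hqL hqy using hQ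
    have hstep : ∀ n, (q (n+1)).1 ⊆ (q n).1 ∧
        (∃ b, (q (n+1)).1 ⊆ Metric.ball b ((1/2 : ℝ) ^ n)) := by
      intro n
      have hq1 := hqL (n+1)
      rw [hLS] at hq1
      obtain ⟨p, hpL, hF'⟩ := Set.mem_iUnion₂.mp hq1
      have hspec := (hF p n ((hinv n).1 p hpL)).1 _ hF'
      have hpy : y ∈ p.2 := (subset_closure.trans hspec.2.2.2) (hqy (n+1))
      have hpq : p = q n := (hinv n).2.1 p hpL (q n) (hqL n) ⟨y, hpy, hqy n⟩
      rw [← hpq]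
      exact ⟨hspec.2.1, hspec.2.2.1⟩
    have hmono : ∀ n m, n ≤ m → (q m).1 ⊆ (q n).1 := by
      intro n m h
      induction m, h using Nat.le_induction with
      | base => exact subset_rfl
      | succ m hm ih => exact (hstep m).1.trans ih
    have happrox : ∀ n, ∃ c ∈ (q n).1, dist (φ c) y < (1/2 : ℝ) ^ n := by
      intro n
      have hycl : y ∈ closure (φ '' (q n).1) := ((hinv n).1 _ (hqL n)).2.2.2.2 (hqy n)
      rw [Metric.mem_closure_iff] at hycl
      obtain ⟨z, hz, hdz⟩ := hycl _ (by positivity : (0:ℝ) < (1/2 : ℝ) ^ n)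
      obtain ⟨c, hc, rfl⟩ := hz
      exact ⟨c, hc, by rwa [dist_comm]⟩
    choose c hcB hcd using happrox
    have hcauchy : CauchySeq c := by
      rw [Metric.cauchySeq_iff]
      intro ε hε
      obtain ⟨N, hN⟩ : ∃ N : ℕ, (1/2 : ℝ) ^ N * 2 < ε := by
        obtain ⟨N, hN⟩ := exists_pow_lt_of_lt_one (by linarith : (0:ℝ) < ε/2)
          (by norm_num : (1/2 : ℝ) < 1)
        exact ⟨N, by linarith⟩
      obtain ⟨b, hb⟩ := (hstep N).2
      refine ⟨N+1, fun m hm k hk => ?_⟩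
      have h1 : c m ∈ Metric.ball b ((1/2 : ℝ) ^ N) := hb (hmono (N+1) m hm (hcB m))
      have h2 : c k ∈ Metric.ball b ((1/2 : ℝ) ^ N) := hb (hmono (N+1) k hk (hcB k))
      rw [Metric.mem_ball] at h1 h2
      calc dist (c m) (c k) ≤ dist (c m) b + dist b (c k) := dist_triangle _ _ _
        _ < (1/2 : ℝ) ^ N + (1/2 : ℝ) ^ N := by
            rw [dist_comm b (c k)]; exact add_lt_add h1 h2
        _ < ε := by linarith
    obtain ⟨g, hg⟩ := cauchySeq_tendsto_of_complete hcauchy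
    have h1 : Filter.Tendsto (fun n => φ (c n)) Filter.atTop (nhds (φ g)) :=
      ((hφc.tendsto g).comp hg)
    have h2 : Filter.Tendsto (fun n => φ (c n)) Filter.atTop (nhds y) := by
      rw [tendsto_iff_dist_tendsto_zero]
      refine squeeze_zero (fun n => dist_nonneg) (fun n => (hcd n).le) ?_
      exact tendsto_pow_atTop_nhds_zero_of_lt_one (by norm_num) (by norm_num)
    have hgy : φ g = y := tendsto_nhds_unique h1 h2
    exact ⟨g, hgy⟩
  -- conclusion
  have hcover : (MulAction.orbit G x : Set X)ᶜ ⊆ ⋃ n, (E n)ᶜ := by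
    intro y hy
    by_contra h
    simp only [Set.mem_iUnion, Set.mem_compl_iff, not_exists, not_not] at h
    exact hy (hsubO (Set.mem_iInter.mpr h))
  refine IsMeagre.mono hcover ?_
  apply isMeagre_iUnion
  intro n
  rw [IsMeagre, compl_compl]
  exact residual_of_dense_open (hEopen n) (hEdense n)

theorem stmt16 {G X : Type*} [Group G] [TopologicalSpace G] [IsTopologicalGroup G] [PolishSpace G]
    [TopologicalSpace X] [PolishSpace X] [MulAction G X] [ContinuousSMul G X]
    (hdense : ∃ x : X, Dense (MulAction.orbit G x : Set X))
    (hcom : {x : X | Dense (MulAction.orbit G x : Set X)} ∈ residual X)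
    (x : X) (hnm : ¬ IsMeagre (MulAction.orbit G x : Set X)) :
    IsMeagre (MulAction.orbit G x : Set X)ᶜ := by
  -- the orbit of `x` is dense
  have hDmeag : IsMeagre {z : X | Dense (MulAction.orbit G z : Set X)}ᶜ := by
    rw [IsMeagre, compl_compl]; exact hcom
  have hinter : ((MulAction.orbit G x : Set X) ∩
      {z : X | Dense (MulAction.orbit G z : Set X)}).Nonempty := by
    by_contra h
    rw [Set.not_nonempty_iff_eq_empty] at h
    apply hnm
    refine hDmeag.mono fun y hy => ?_
    intro hyD
    exact Set.eq_empty_iff_forall_notMem.mp h y ⟨hy, hyD⟩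
  obtain ⟨y, hyO, hyD⟩ := hinter
  have horb : MulAction.orbit G y = MulAction.orbit G x := MulAction.orbit_eq_iff.mpr hyO
  have hd : Dense (MulAction.orbit G x : Set X) := horb ▸ hyD
  letI := upgradeIsCompletelyMetrizable G
  letI := upgradeIsCompletelyMetrizable X
  exact aux_main x hd hnm
end
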